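/- arXiv:1703.00405 — 5 statements merged into one kernel-verified Lean document; each statement's English description precedes it below -/
import Mathlib

section
/- Let A₁,…,A_N be nonnegative square matrices. Then ρ(Σᵢ Aᵢ) < 1 if and only if there exist positive definite diagonal matrices Q₁,…,Q_N such that ((𝟙_N ⊗ I_n)·[A₁ … A_N])ᵀ · diag(Q₁,…,Q_N) · ((𝟙_N ⊗ I_n)·[A₁ … A_N]) − diag(Q₁,…,Q_N) ≺ 0. -/
open Matrix

noncomputable def specRad {m : Type*} [Fintype m] [DecidableEq m] (M : Matrix m m ℝ) : ℝ :=
  (spectralRadius ℂ (M.map (fun x => (x : ℂ)))).toReal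

def NegDef {m : Type*} [Fintype m] (M : Matrix m m ℝ) : Prop := (-M).PosDef

/-- The matrix `(𝟙_N ⊗ I_n)·[A₁ … A_N]`, whose `(i,j)` block is `A j`. -/
def blockRep {n N : ℕ} (A : Fin N → Matrix (Fin n) (Fin n) ℝ) :
    Matrix (Fin N × Fin n) (Fin N × Fin n) ℝ :=
  fun p q => A q.1 p.2 q.2

section Aux

open Finset Filter

attribute [local instance] Matrix.linftyOpNormedRing Matrix.linftyOpNormedAlgebra

variable {ι : Type*} [Fintype ι] [DecidableEq ι]

private lemma quad_form' (P : Matrix ι ι ℝ) (d : ι → ℝ) (x : ι → ℝ) :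
    x ⬝ᵥ ((Pᵀ * diagonal d * P) *ᵥ x) = ∑ k, d k * ((P *ᵥ x) k)^2 := by
  rw [← mulVec_mulVec, ← mulVec_mulVec, dotProduct_mulVec, vecMul_transpose]
  simp only [dotProduct, mulVec_diagonal]
  exact Finset.sum_congr rfl fun k _ => by ring

private lemma quad_diag' (d : ι → ℝ) (x : ι → ℝ) :
    x ⬝ᵥ ((diagonal d) *ᵥ x) = ∑ k, d k * (x k)^2 := by
  simp only [dotProduct, mulVec_diagonal]
  exact Finset.sum_congr rfl fun k _ => by ring

omit [DecidableEq ι] in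
private lemma sum_dx_pos' {d x : ι → ℝ} (hd : ∀ i, 0 < d i) (hx : x ≠ 0) :
    0 < ∑ k, d k * (x k) ^ 2 := by
  obtain ⟨j, hj⟩ : ∃ j, x j ≠ 0 := by
    by_contra h; push_neg at h; exact hx (funext fun j => h j)
  have : 0 < d j * (x j) ^ 2 := mul_pos (hd j) (by positivity)
  refine Finset.sum_pos' (fun k _ => mul_nonneg (hd k).le (sq_nonneg _)) ⟨j, Finset.mem_univ j, this⟩

private lemma steinNegDef (P : Matrix ι ι ℝ) (hP : ∀ i j, 0 ≤ P i j)
    (μ : ℝ) (hμ0 : 0 ≤ μ) (hμ1 : μ < 1) (w e : ι → ℝ)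
    (hw : ∀ i, 0 < w i) (he : ∀ i, 0 < e i)
    (h1 : ∀ i, (P *ᵥ w) i ≤ μ * w i) (h2 : ∀ i, (Pᵀ *ᵥ e) i ≤ μ * e i) :
    NegDef (Pᵀ * diagonal (fun i => e i / w i) * P - diagonal (fun i => e i / w i)) := by
  set d : ι → ℝ := fun i => e i / w i with hd
  have hdpos : ∀ i, 0 < d i := fun i => div_pos (he i) (hw i)
  have hdw : ∀ k, d k * w k = e k := fun k => div_mul_cancel₀ _ (hw k).ne'
  refine posDef_iff_dotProduct_mulVec.mpr ⟨?_, ?_⟩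
  · have hD : (diagonal d).IsHermitian := isHermitian_diagonal d
    have hH : (Pᵀ * diagonal d * P).IsHermitian := by
      have := isHermitian_conjTranspose_mul_mul P hD
      rwa [conjTranspose_eq_transpose_of_trivial] at this
    exact (hH.sub hD).neg
  · intro x hx
    set T : ι → ℝ := fun k => ∑ l, P k l * (x l)^2 / w l with hT
    have hTnn : ∀ k, 0 ≤ T k := fun k =>
      Finset.sum_nonneg fun l _ => div_nonneg (mul_nonneg (hP k l) (sq_nonneg _)) (hw l).le
    have hA : ∀ k, ((P *ᵥ x) k)^2 ≤ (P *ᵥ w) k * T k := by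
      intro k
      have habs : |(P *ᵥ x) k| ≤ ∑ l, P k l * |x l| := by
        refine (Finset.abs_sum_le_sum_abs _ _).trans ?_
        exact le_of_eq (Finset.sum_congr rfl fun l _ => by
          rw [abs_mul, abs_of_nonneg (hP k l)])
      have hsq : ((P *ᵥ x) k)^2 ≤ (∑ l, P k l * |x l|)^2 := by
        rw [← sq_abs]
        exact pow_le_pow_left₀ (abs_nonneg _) habs 2
      refine hsq.trans ?_
      have hcs := Finset.sum_sq_le_sum_mul_sum_of_sq_eq_mul Finset.univ
        (f := fun l => P k l * w l) (g := fun l => P k l * (x l)^2 / w l)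
        (r := fun l => P k l * |x l|)
        (fun l _ => mul_nonneg (hP k l) (hw l).le)
        (fun l _ => div_nonneg (mul_nonneg (hP k l) (sq_nonneg _)) (hw l).le)
        (fun l _ => by
          have hwl : w l ≠ 0 := (hw l).ne'
          rw [mul_pow, sq_abs]
          field_simp)
      calc (∑ l, P k l * |x l|)^2 ≤ (∑ l, P k l * w l) * ∑ l, P k l * (x l)^2 / w l := hcs
        _ = (P *ᵥ w) k * T k := by rw [hT]; simp [Matrix.mulVec, dotProduct]
    have key : ∑ k, d k * ((P *ᵥ x) k)^2 ≤ μ^2 * ∑ l, d l * (x l)^2 := by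
      calc ∑ k, d k * ((P *ᵥ x) k)^2
          ≤ ∑ k, d k * ((μ * w k) * T k) := by
            refine Finset.sum_le_sum fun k _ => ?_
            refine mul_le_mul_of_nonneg_left ?_ (hdpos k).le
            exact (hA k).trans (mul_le_mul_of_nonneg_right (h1 k) (hTnn k))
        _ = μ * ∑ k, e k * T k := by
            rw [Finset.mul_sum]
            exact Finset.sum_congr rfl fun k _ => by rw [← hdw k]; ring
        _ = μ * ∑ l, (x l)^2 / w l * ∑ k, P k l * e k := by
            congr 1
            simp_rw [hT, Finset.mul_sum]
            rw [Finset.sum_comm]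
            refine Finset.sum_congr rfl fun l _ => ?_
            exact Finset.sum_congr rfl fun k _ => by ring
        _ ≤ μ * ∑ l, (x l)^2 / w l * (μ * e l) := by
            refine mul_le_mul_of_nonneg_left (Finset.sum_le_sum fun l _ => ?_) hμ0
            have hPe : ∑ k, P k l * e k = (Pᵀ *ᵥ e) l := by
              simp [Matrix.mulVec, dotProduct, transpose_apply, mul_comm]
            rw [hPe]
            exact mul_le_mul_of_nonneg_left (h2 l) (div_nonneg (sq_nonneg _) (hw l).le)
        _ = μ^2 * ∑ l, d l * (x l)^2 := by
            rw [Finset.mul_sum, Finset.mul_sum]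
            refine Finset.sum_congr rfl fun l _ => ?_
            have hwl : w l ≠ 0 := (hw l).ne'
            rw [hd]
            field_simp
    have hpos : 0 < ∑ l, d l * (x l)^2 := sum_dx_pos' hdpos hx
    have hq : star x ⬝ᵥ ((-(Pᵀ * diagonal d * P - diagonal d)) *ᵥ x)
        = ∑ l, d l * (x l)^2 - ∑ k, d k * ((P *ᵥ x) k)^2 := by
      rw [star_trivial, neg_sub, sub_mulVec, dotProduct_sub, quad_form', quad_diag']
    rw [hq]
    have hμ2 : μ^2 < 1 := by nlinarith
    nlinarith [mul_lt_mul_of_pos_right hμ2 hpos]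

private lemma eig_bound' (P : Matrix ι ι ℝ) (hP : ∀ i j, 0 ≤ P i j) (q : ι → ℝ)
    (hq : ∀ i, 0 < q i) (hneg : NegDef (Pᵀ * diagonal q * P - diagonal q))
    {x : ι → ℝ} (hx0 : x ≠ 0) (hx : ∀ i, 0 ≤ x i)
    {r : ℝ} (hr : 0 ≤ r) (hrx : ∀ i, r * x i ≤ (P *ᵥ x) i) : r < 1 := by
  have h := (posDef_iff_dotProduct_mulVec.mp hneg).2 hx0
  rw [star_trivial, neg_sub, sub_mulVec, dotProduct_sub, quad_form', quad_diag'] at h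
  have hterm : ∀ k, r^2 * (q k * (x k)^2) ≤ q k * ((P *ᵥ x) k)^2 := by
    intro k
    have h1 : (r * x k)^2 ≤ ((P *ᵥ x) k)^2 :=
      pow_le_pow_left₀ (mul_nonneg hr (hx k)) (hrx k) 2
    have := mul_le_mul_of_nonneg_left h1 (hq k).le
    calc r^2 * (q k * (x k)^2) = q k * (r * x k)^2 := by ring
      _ ≤ q k * ((P *ᵥ x) k)^2 := this
  have hsum : r^2 * ∑ k, q k * (x k)^2 ≤ ∑ k, q k * ((P *ᵥ x) k)^2 := by
    rw [Finset.mul_sum]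
    exact Finset.sum_le_sum fun k _ => hterm k
  have hpos : 0 < ∑ k, q k * (x k)^2 := sum_dx_pos' hq hx0
  by_contra hge
  push_neg at hge
  have h2 : (1:ℝ) ≤ r^2 := by nlinarith
  have h3 := mul_le_mul_of_nonneg_right h2 hpos.le
  linarith

private lemma eigvec_exists' {A : Matrix ι ι ℂ} {lam : ℂ} (h : lam ∈ spectrum ℂ A) :
    ∃ v : ι → ℂ, v ≠ 0 ∧ A *ᵥ v = lam • v := by
  rw [spectrum.mem_iff] at h
  have hdet : (lam • (1 : Matrix ι ι ℂ) - A).det = 0 := by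
    by_contra hne
    exact h (by
      rw [Matrix.isUnit_iff_isUnit_det]
      have halg : (algebraMap ℂ (Matrix ι ι ℂ)) lam = lam • (1 : Matrix ι ι ℂ) := by
        rw [Algebra.algebraMap_eq_smul_one]
      rw [halg]
      exact isUnit_iff_ne_zero.mpr hne)
  obtain ⟨v, hv0, hv⟩ := (Matrix.exists_mulVec_eq_zero_iff).mpr hdet
  refine ⟨v, hv0, ?_⟩
  rw [sub_mulVec, smul_mulVec, one_mulVec, sub_eq_zero] at hv
  exact hv.symm

private lemma spectrum_transpose' (A : Matrix ι ι ℂ) : spectrum ℂ Aᵀ = spectrum ℂ A := by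
  ext lam
  rw [spectrum.mem_iff, spectrum.mem_iff]
  have hT : (algebraMap ℂ (Matrix ι ι ℂ)) lam - Aᵀ = ((algebraMap ℂ (Matrix ι ι ℂ)) lam - A)ᵀ := by
    rw [transpose_sub]
    congr 1
    rw [Algebra.algebraMap_eq_smul_one, transpose_smul, transpose_one]
  rw [hT]
  constructor <;> intro h hu <;> apply h
  · rw [Matrix.isUnit_iff_isUnit_det] at hu ⊢
    rwa [Matrix.det_transpose]
  · rw [Matrix.isUnit_iff_isUnit_det] at hu ⊢
    rwa [Matrix.det_transpose] at hu

private lemma specRad_lt_one' {M : Matrix ι ι ℝ}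
    (h : ∀ lam : ℂ, lam ∈ spectrum ℂ (M.map (fun x => (x : ℂ))) → ‖lam‖ < 1) :
    specRad M < 1 := by
  set A := M.map (fun x => (x : ℂ))
  have hfin : (spectrum ℂ A).Finite := A.finite_spectrum
  set s := hfin.toFinset
  have hrad : spectralRadius ℂ A ≤ (s.sup fun k => ‖k‖₊ : NNReal) := by
    refine iSup₂_le fun k hk => ?_
    exact_mod_cast ENNReal.coe_le_coe.mpr (Finset.le_sup (f := fun k => ‖k‖₊)
      (hfin.mem_toFinset.mpr hk))
  have hs1 : (s.sup fun k => ‖k‖₊ : NNReal) < 1 := by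
    rw [Finset.sup_lt_iff (by norm_num)]
    intro k hk
    have := h k (hfin.mem_toFinset.mp hk)
    rw [← NNReal.coe_lt_one, coe_nnnorm]
    exact this
  calc specRad M = (spectralRadius ℂ A).toReal := rfl
    _ ≤ ((s.sup fun k => ‖k‖₊ : NNReal) : ℝ) := by
        rw [← ENNReal.coe_toReal]
        exact ENNReal.toReal_mono ENNReal.coe_ne_top hrad
    _ < 1 := by exact_mod_cast hs1

private lemma pow_map_coe' (M : Matrix ι ι ℝ) (k : ℕ) :
    (M.map (fun x => (x : ℂ)))^k = (M^k).map (fun x => (x : ℂ)) := by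
  induction k with
  | zero => simp [Matrix.map_one]
  | succ k ih =>
      rw [pow_succ, pow_succ, ih]
      exact (Matrix.map_mul (f := Complex.ofRealHom)).symm

private lemma norm_map_coe' (M : Matrix ι ι ℝ) : ‖M.map (fun x => (x : ℂ))‖₊ = ‖M‖₊ := by
  rw [Matrix.linfty_opNNNorm_def, Matrix.linfty_opNNNorm_def]
  congr 1
  funext i
  exact Finset.sum_congr rfl fun j _ => by simp [Matrix.map_apply]

private lemma pow_entries_nonneg' (M : Matrix ι ι ℝ) (hM : ∀ i j, 0 ≤ M i j) (k : ℕ) :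
    ∀ i j, 0 ≤ (M^k) i j := by
  induction k with
  | zero => intro i j; by_cases h : i = j <;> simp [pow_zero, Matrix.one_apply, h]
  | succ k ih =>
      intro i j
      rw [pow_succ, Matrix.mul_apply]
      exact Finset.sum_nonneg fun l _ => mul_nonneg (ih i l) (hM l j)

private lemma exists_pow_rowsum' [Nonempty ι] (M : Matrix ι ι ℝ) (h : specRad M < 1) :
    ∃ μ : ℝ, 0 < μ ∧ μ < 1 ∧ ∃ K : ℕ, 1 ≤ K ∧ ∀ i, ((M^K) *ᵥ (fun _ => (1:ℝ))) i ≤ μ^K := by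
  set a := M.map (fun x => (x : ℂ)) with ha
  have hfin : spectralRadius ℂ a ≠ ⊤ :=
    ((spectrum.spectralRadius_le_nnnorm (𝕜 := ℂ) a).trans_lt ENNReal.coe_lt_top).ne
  set r : ℝ := (spectralRadius ℂ a).toReal with hr
  have hr0 : 0 ≤ r := ENNReal.toReal_nonneg
  have hr1 : r < 1 := h
  set μ : ℝ := (r + 1) / 2 with hμ
  have hμ0 : 0 < μ := by positivity
  have hμ1 : μ < 1 := by rw [hμ]; linarith
  have hrμ : spectralRadius ℂ a < ENNReal.ofReal μ := by
    rw [← ENNReal.ofReal_toReal hfin]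
    exact ENNReal.ofReal_lt_ofReal_iff_of_nonneg hr0 |>.mpr (by rw [hμ]; linarith)
  have hg := spectrum.pow_nnnorm_pow_one_div_tendsto_nhds_spectralRadius a
  have hev : ∀ᶠ k : ℕ in atTop, (‖a ^ k‖₊ : ENNReal) ^ (1/(k:ℝ)) < ENNReal.ofReal μ :=
    hg.eventually_lt_const hrμ
  obtain ⟨K, hK1, hK⟩ : ∃ K : ℕ, 1 ≤ K ∧ (‖a ^ K‖₊ : ENNReal) ^ (1/(K:ℝ)) < ENNReal.ofReal μ := by
    obtain ⟨K0, hK0⟩ := hev.exists_forall_of_atTop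
    exact ⟨max K0 1, le_max_right _ _, hK0 _ (le_max_left _ _)⟩
  refine ⟨μ, hμ0, hμ1, K, hK1, ?_⟩
  have hKne : (K:ℝ) ≠ 0 := Nat.cast_ne_zero.mpr (by omega)
  have hnorm : (‖a ^ K‖₊ : ENNReal) < ENNReal.ofReal (μ ^ K) := by
    have heq : (‖a ^ K‖₊ : ENNReal) = ((‖a ^ K‖₊ : ENNReal) ^ (1/(K:ℝ))) ^ ((K:ℕ):ℝ) := by
      rw [← ENNReal.rpow_mul, one_div, inv_mul_cancel₀ hKne, ENNReal.rpow_one]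
    have hofr : ENNReal.ofReal (μ ^ K) = (ENNReal.ofReal μ) ^ ((K:ℕ):ℝ) := by
      rw [← Real.rpow_natCast μ K, ENNReal.ofReal_rpow_of_pos hμ0]
    rw [heq, hofr]
    exact ENNReal.rpow_lt_rpow hK (by positivity)
  have hnR : ‖a ^ K‖ < μ ^ K := by
    rw [← ENNReal.ofReal_coe_nnreal, coe_nnnorm] at hnorm
    exact (ENNReal.ofReal_lt_ofReal_iff_of_nonneg (norm_nonneg _)).mp hnorm
  intro i
  calc ((M^K) *ᵥ (fun _ => (1:ℝ))) i = ∑ j, (M^K) i j := by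
        simp [Matrix.mulVec, dotProduct]
    _ ≤ ∑ j, |(M^K) i j| := Finset.sum_le_sum fun j _ => le_abs_self _
    _ = ((∑ j, ‖(M^K) i j‖₊ : NNReal) : ℝ) := by
        push_cast
        exact Finset.sum_congr rfl fun j _ => (Real.norm_eq_abs _).symm
    _ ≤ (‖M^K‖₊ : ℝ) := by
        rw [Matrix.linfty_opNNNorm_def]
        exact_mod_cast NNReal.coe_le_coe.mpr
          (Finset.le_sup (f := fun i => ∑ j, ‖(M^K) i j‖₊) (Finset.mem_univ i))
    _ = ‖a ^ K‖ := by rw [← norm_map_coe' (M^K), ← pow_map_coe']; rfl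
    _ ≤ μ ^ K := hnR.le

private lemma exists_pos_vec' [Nonempty ι] (M : Matrix ι ι ℝ) (hM : ∀ i j, 0 ≤ M i j)
    (h : specRad M < 1) :
    ∃ μ : ℝ, 0 < μ ∧ μ < 1 ∧ ∃ w : ι → ℝ, (∀ i, 0 < w i) ∧ ∀ i, (M *ᵥ w) i ≤ μ * w i := by
  obtain ⟨μ, hμ0, hμ1, K, hK1, hKb⟩ := exists_pow_rowsum' M h
  set u : ℕ → ι → ℝ := fun j => (M^j) *ᵥ (fun _ => (1:ℝ)) with hu
  set c : ℕ → ℝ := fun j => (μ⁻¹)^j with hc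
  have hcpos : ∀ j, 0 < c j := fun j => by positivity
  have hunn : ∀ j i, 0 ≤ u j i := fun j i =>
    Finset.sum_nonneg fun l _ => mul_nonneg (pow_entries_nonneg' M hM j i l) zero_le_one
  have hu0 : ∀ i, u 0 i = 1 := fun i => by simp [hu, Matrix.one_mulVec]
  set w : ι → ℝ := fun i => ∑ j ∈ Finset.range K, c j * u j i with hw
  have hw1 : ∀ i, 1 ≤ w i := by
    intro i
    have := Finset.single_le_sum (f := fun j => c j * u j i)
      (fun j _ => mul_nonneg (hcpos j).le (hunn j i))
      (Finset.mem_range.mpr (by omega : 0 < K))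
    have h00 : c 0 * u 0 i = 1 := by rw [hu0 i]; simp [hc]
    rw [h00] at this
    exact this
  have hwpos : ∀ i, 0 < w i := fun i => lt_of_lt_of_le one_pos (hw1 i)
  refine ⟨μ, hμ0, hμ1, w, hwpos, ?_⟩
  intro i
  have hstep : ∀ j, (M *ᵥ u j) = u (j+1) := by
    intro j
    rw [hu]
    show M *ᵥ ((M^j) *ᵥ _) = _
    rw [Matrix.mulVec_mulVec, ← pow_succ']
  have hMw : (M *ᵥ w) i = ∑ j ∈ Finset.range K, c j * u (j+1) i := by
    have h0 : (M *ᵥ w) i = ∑ l, M i l * ∑ j ∈ Finset.range K, c j * u j l := rfl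
    rw [h0]
    simp_rw [Finset.mul_sum]
    rw [Finset.sum_comm]
    refine Finset.sum_congr rfl fun j _ => ?_
    have : ∑ l, M i l * (c j * u j l) = c j * (M *ᵥ u j) i := by
      simp only [Matrix.mulVec, dotProduct]
      rw [Finset.mul_sum]
      exact Finset.sum_congr rfl fun l _ => by ring
    rw [this, hstep j]
  have hcb : ∀ j, c j = μ * c (j+1) := by
    intro j
    rw [hc]
    show (μ⁻¹)^j = μ * (μ⁻¹)^(j+1)
    rw [pow_succ]
    field_simp
  have hcK : c K * u K i ≤ 1 := by
    have h1 : c K * u K i ≤ c K * μ^K :=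
      mul_le_mul_of_nonneg_left (hKb i) (hcpos K).le
    have h2 : c K * μ^K = 1 := by
      rw [hc]
      show (μ⁻¹)^K * μ^K = 1
      rw [← mul_pow, inv_mul_cancel₀ hμ0.ne', one_pow]
    linarith
  calc (M *ᵥ w) i = ∑ j ∈ Finset.range K, c j * u (j+1) i := hMw
    _ = μ * ∑ j ∈ Finset.range K, c (j+1) * u (j+1) i := by
        rw [Finset.mul_sum]
        exact Finset.sum_congr rfl fun j _ => by rw [hcb j]; ring
    _ = μ * ((∑ j ∈ Finset.range (K+1), c j * u j i) - c 0 * u 0 i) := by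
        congr 1
        have := Finset.sum_range_succ' (fun j => c j * u j i) K
        linarith [this]
    _ = μ * (w i + c K * u K i - 1) := by
        rw [Finset.sum_range_succ]
        rw [hu0 i]
        have : c 0 = 1 := by rw [hc]; simp
        rw [this, hw]
        ring
    _ ≤ μ * w i := by
        refine mul_le_mul_of_nonneg_left ?_ hμ0.le
        linarith

end Aux

theorem stmt8 {n N : ℕ} (A : Fin N → Matrix (Fin n) (Fin n) ℝ)
    (hA : ∀ i, ∀ k l, 0 ≤ A i k l) :
    specRad (∑ i, A i) < 1 ↔
      ∃ q : Fin N → Fin n → ℝ, (∀ i k, 0 < q i k) ∧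
        NegDef ((blockRep A)ᵀ * Matrix.diagonal (fun p : Fin N × Fin n => q p.1 p.2) *
            blockRep A - Matrix.diagonal (fun p : Fin N × Fin n => q p.1 p.2)) := by
  classical
  set M := ∑ i, A i with hMdef
  have hMapp : ∀ k l, M k l = ∑ j, A j k l := by
    intro k l
    rw [hMdef]
    simp [Matrix.sum_apply]
  have hMnn : ∀ k l, 0 ≤ M k l := fun k l => by
    rw [hMapp]; exact Finset.sum_nonneg fun j _ => hA j k l
  have hBnn : ∀ p q', 0 ≤ blockRep A p q' := fun p q' => hA q'.1 p.2 q'.2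
  have hBlift : ∀ (y : Fin n → ℝ) (p : Fin N × Fin n),
      ((blockRep A) *ᵥ (fun r => y r.2)) p = (M *ᵥ y) p.2 := by
    intro y p
    simp only [Matrix.mulVec, dotProduct, blockRep]
    rw [Fintype.sum_prod_type]
    rw [Finset.sum_comm]
    refine Finset.sum_congr rfl fun l _ => ?_
    rw [hMapp, Finset.sum_mul]
  constructor
  · intro hlt
    rcases Nat.eq_zero_or_pos n with hn | hn
    · refine ⟨fun _ _ => 1, fun i k => one_pos, ?_⟩
      subst hn
      constructor
      · show _ = _
        ext p q'
        exact p.2.elim0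
      · intro x hx
        exact absurd (Finsupp.ext fun p => p.2.elim0) hx
    rcases Nat.eq_zero_or_pos N with hN | hN
    · subst hN
      refine ⟨fun i => i.elim0, fun i => i.elim0, ?_⟩
      constructor
      · show _ = _
        ext p q'
        exact p.1.elim0
      · intro x hx
        exact absurd (Finsupp.ext fun p => p.1.elim0) hx
    haveI : Nonempty (Fin n) := ⟨⟨0, hn⟩⟩
    have hMT : ∀ k l, 0 ≤ Mᵀ k l := fun k l => hMnn l k
    have hsT : specRad Mᵀ < 1 := by
      have h1 : (Mᵀ).map (fun x : ℝ => (x:ℂ)) = (M.map (fun x : ℝ => (x:ℂ)))ᵀ :=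
        Matrix.transpose_map
      show (spectralRadius ℂ _).toReal < 1
      rw [h1]
      have h2 : spectralRadius ℂ (M.map (fun x : ℝ => (x:ℂ)))ᵀ
          = spectralRadius ℂ (M.map (fun x : ℝ => (x:ℂ))) := by
        unfold spectralRadius
        rw [spectrum_transpose']
      rw [h2]
      exact hlt
    obtain ⟨m1, hm10, hm11, w0, hw0, hw0M⟩ := exists_pos_vec' M hMnn hlt
    obtain ⟨m2, hm20, hm21, g, hg, hgM⟩ := exists_pos_vec' Mᵀ hMT hsT
    set m' : ℝ := max m1 m2 with hm'
    have hm'0 : 0 < m' := lt_max_of_lt_left hm10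
    have hm'1 : m' < 1 := max_lt hm11 hm21
    set μ : ℝ := (m' + 1)/2 with hmdef
    have hm'm : m' < μ := by rw [hmdef]; linarith
    have hμ1 : μ < 1 := by rw [hmdef]; linarith
    have hμ0 : 0 < μ := lt_trans hm'0 hm'm
    have hne : (Finset.univ : Finset (Fin n)).Nonempty := Finset.univ_nonempty
    set δ : ℝ := Finset.univ.inf' hne g with hddef
    have hδ0 : 0 < δ := (Finset.lt_inf'_iff hne).mpr fun k _ => hg k
    have hδle : ∀ k, δ ≤ g k := fun k => Finset.inf'_le g (Finset.mem_univ k)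
    have hNpos : (0:ℝ) < N := by exact_mod_cast hN
    set ε : ℝ := (μ - m') * δ / N with hedef0
    have hε0 : 0 < ε := div_pos (mul_pos (by linarith) hδ0) hNpos
    have hNe : (N:ℝ) * ε = (μ - m') * δ := by
      rw [hedef0]; field_simp
    set w : Fin N × Fin n → ℝ := fun p => w0 p.2 with hwdef
    set e : Fin N × Fin n → ℝ := fun p => ((A p.1)ᵀ *ᵥ g) p.2 + ε with hedef
    have hwpos : ∀ p, 0 < w p := fun p => hw0 p.2
    have hATg : ∀ i k, 0 ≤ ((A i)ᵀ *ᵥ g) k := by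
      intro i k
      show 0 ≤ ∑ l, (A i)ᵀ k l * g l
      exact Finset.sum_nonneg fun l _ => mul_nonneg (hA i l k) (hg l).le
    have hepos : ∀ p, 0 < e p := fun p =>
      add_pos_of_nonneg_of_pos (hATg p.1 p.2) hε0
    have h1 : ∀ p, ((blockRep A) *ᵥ w) p ≤ μ * w p := by
      intro p
      have hm1m : m1 ≤ μ := le_trans (le_max_left _ _) hm'm.le
      calc ((blockRep A) *ᵥ w) p = (M *ᵥ w0) p.2 := hBlift w0 p
        _ ≤ m1 * w0 p.2 := hw0M p.2
        _ ≤ μ * w0 p.2 := mul_le_mul_of_nonneg_right hm1m (hw0 p.2).le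
    have hMTg : ∀ k, (Mᵀ *ᵥ g) k = ∑ i, ((A i)ᵀ *ᵥ g) k := by
      intro k
      simp only [Matrix.mulVec, dotProduct, transpose_apply]
      calc ∑ m, M m k * g m = ∑ m, ∑ i, A i m k * g m :=
            Finset.sum_congr rfl fun m _ => by rw [hMapp, Finset.sum_mul]
        _ = ∑ i, ∑ m, A i m k * g m := Finset.sum_comm
    have hBTe : ∀ p : Fin N × Fin n, ((blockRep A)ᵀ *ᵥ e) p
        = ∑ k, A p.1 k p.2 * ((Mᵀ *ᵥ g) k + N * ε) := by
      intro p
      have lhs : ((blockRep A)ᵀ *ᵥ e) p = ∑ i, ∑ k, A p.1 k p.2 * e (i, k) := by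
        show ∑ q' : Fin N × Fin n, (blockRep A)ᵀ p q' * e q' = _
        rw [Fintype.sum_prod_type]
        rfl
      rw [lhs, Finset.sum_comm]
      refine Finset.sum_congr rfl fun k _ => ?_
      rw [← Finset.mul_sum]
      congr 1
      have heik : ∀ i : Fin N, e (i, k) = ((A i)ᵀ *ᵥ g) k + ε := fun i => rfl
      simp_rw [heik]
      rw [Finset.sum_add_distrib, Finset.sum_const, Finset.card_univ, Fintype.card_fin,
        hMTg k, nsmul_eq_mul]
    have h2 : ∀ p, ((blockRep A)ᵀ *ᵥ e) p ≤ μ * e p := by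
      intro p
      rw [hBTe p]
      have hbound : ∀ k, (Mᵀ *ᵥ g) k + N * ε ≤ μ * g k := by
        intro k
        have hb1 : (Mᵀ *ᵥ g) k ≤ m2 * g k := hgM k
        have hb2 : m2 * g k ≤ m' * g k :=
          mul_le_mul_of_nonneg_right (le_max_right _ _) (hg k).le
        have hb3 : (N:ℝ) * ε ≤ (μ - m') * g k := by
          rw [hNe]
          exact mul_le_mul_of_nonneg_left (hδle k) (by linarith)
        nlinarith
      calc ∑ k, A p.1 k p.2 * ((Mᵀ *ᵥ g) k + N * ε)
          ≤ ∑ k, A p.1 k p.2 * (μ * g k) := Finset.sum_le_sum fun k _ =>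
            mul_le_mul_of_nonneg_left (hbound k) (hA p.1 k p.2)
        _ = μ * ((A p.1)ᵀ *ᵥ g) p.2 := by
            have hexp : ((A p.1)ᵀ *ᵥ g) p.2 = ∑ k, A p.1 k p.2 * g k := by
              show ∑ k, (A p.1)ᵀ p.2 k * g k = _
              exact Finset.sum_congr rfl fun k _ => rfl
            rw [hexp, Finset.mul_sum]
            exact Finset.sum_congr rfl fun k _ => by ring
        _ ≤ μ * e p := by
            have hle : ((A p.1)ᵀ *ᵥ g) p.2 ≤ e p := by
              simp only [hedef]
              linarith [hε0]
            exact mul_le_mul_of_nonneg_left hle hμ0.le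
    have hstein := steinNegDef (blockRep A) hBnn μ hμ0.le hμ1 w e hwpos hepos h1 h2
    exact ⟨fun i k => e (i,k) / w (i,k),
      fun i k => div_pos (hepos (i,k)) (hwpos (i,k)), hstein⟩
  · rintro ⟨q, hq, hneg⟩
    apply specRad_lt_one'
    intro lam hlam
    obtain ⟨v, hv0, hv⟩ := eigvec_exists' hlam
    rcases Nat.eq_zero_or_pos n with hn | hn
    · subst hn
      exact absurd (funext fun k => k.elim0) hv0
    rcases Nat.eq_zero_or_pos N with hN | hN
    · subst hN
      have hM0 : M = 0 := by
        rw [hMdef]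
        simp
      have hmap : (M.map (fun x:ℝ => (x:ℂ))) = 0 := by
        rw [hM0]
        ext i j
        simp
      rw [hmap, Matrix.zero_mulVec] at hv
      have hl0 : lam = 0 := (smul_eq_zero.mp hv.symm).resolve_right hv0
      rw [hl0]
      norm_num
    set x : Fin N × Fin n → ℝ := fun p => ‖v p.2‖ with hxdef
    have hxnn : ∀ p, 0 ≤ x p := fun p => norm_nonneg _
    have hx0 : x ≠ 0 := by
      obtain ⟨k, hk⟩ := Function.ne_iff.mp hv0
      intro hcon
      have hevz := congrFun hcon (⟨0,hN⟩, k)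
      simp only [hxdef, Pi.zero_apply] at hevz
      exact hk (norm_eq_zero.mp hevz)
    have hkey : ∀ p, ‖lam‖ * x p ≤ ((blockRep A) *ᵥ x) p := by
      intro p
      have hBx : ((blockRep A) *ᵥ x) p = (M *ᵥ (fun l => ‖v l‖)) p.2 :=
        hBlift (fun l => ‖v l‖) p
      rw [hBx]
      have hnormle : ‖((M.map (fun x:ℝ => (x:ℂ))) *ᵥ v) p.2‖
          ≤ (M *ᵥ (fun l => ‖v l‖)) p.2 := by
        have hexp : ((M.map (fun x:ℝ => (x:ℂ))) *ᵥ v) p.2 = ∑ l, (M p.2 l : ℂ) * v l := by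
          simp [Matrix.mulVec, dotProduct, Matrix.map_apply]
        rw [hexp]
        have hrhs : (M *ᵥ (fun l => ‖v l‖)) p.2 = ∑ l, M p.2 l * ‖v l‖ := rfl
        rw [hrhs]
        refine (norm_sum_le _ _).trans (le_of_eq (Finset.sum_congr rfl fun l _ => ?_))
        rw [norm_mul, Complex.norm_real, Real.norm_of_nonneg (hMnn p.2 l)]
      calc ‖lam‖ * x p = ‖lam * v p.2‖ := by rw [hxdef]; simp [norm_mul]
        _ = ‖((M.map (fun x:ℝ => (x:ℂ))) *ᵥ v) p.2‖ := by
            rw [hv]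
            simp [Pi.smul_apply, smul_eq_mul]
        _ ≤ _ := hnormle
    exact eig_bound' (blockRep A) hBnn (fun p => q p.1 p.2) (fun p => hq p.1 p.2)
      hneg hx0 hxnn (norm_nonneg lam) hkey
end

section
/- For two nonnegative matrices G₁ ∈ ℝ^{p×m}_{≥0} and G₂ ∈ ℝ^{m×p}_{≥0}, the following are equivalent: (a) ρ(G₁G₂) < 1; (b) there exist vectors π₁ ∈ ℝ^m_{>0} and π₂ ∈ ℝ^p such that π₁ᵀ + π₂ᵀG₂ ≥ 0 and π₁ᵀG₁ + π₂ᵀ < 0 componentwise. -/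
open Matrix

section Aux

open Filter
open scoped ENNReal NNReal

attribute [local instance] Matrix.linftyOpNormedRing Matrix.linftyOpNormedAlgebra

private lemma mulVec_nonneg' {a b : ℕ} {G : Matrix (Fin a) (Fin b) ℝ} (hG : ∀ i j, 0 ≤ G i j)
    {v : Fin b → ℝ} (hv : ∀ j, 0 ≤ v j) (i : Fin a) : 0 ≤ G.mulVec v i := by
  simp only [Matrix.mulVec, dotProduct]
  exact Finset.sum_nonneg fun j _ => mul_nonneg (hG i j) (hv j)

private lemma mulVec_mono' {a b : ℕ} {G : Matrix (Fin a) (Fin b) ℝ} (hG : ∀ i j, 0 ≤ G i j)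
    {u v : Fin b → ℝ} (huv : ∀ j, u j ≤ v j) (i : Fin a) : G.mulVec u i ≤ G.mulVec v i := by
  simp only [Matrix.mulVec, dotProduct]
  exact Finset.sum_le_sum fun j _ => mul_le_mul_of_nonneg_left (huv j) (hG i j)

private lemma pow_entry_nonneg {p : ℕ} {N : Matrix (Fin p) (Fin p) ℝ}
    (hN : ∀ i j, 0 ≤ N i j) (k : ℕ) : ∀ i j, 0 ≤ (N ^ k) i j := by
  induction k with
  | zero =>
    intro i j
    rw [pow_zero, Matrix.one_apply]
    split <;> norm_num
  | succ n ih =>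
    intro i j
    rw [pow_succ, Matrix.mul_apply]
    exact Finset.sum_nonneg fun l _ => mul_nonneg (ih i l) (hN l j)

private lemma map_pow' {p : ℕ} (N : Matrix (Fin p) (Fin p) ℝ) (k : ℕ) :
    (N.map (fun x : ℝ => (x : ℂ))) ^ k = (N ^ k).map (fun x : ℝ => (x : ℂ)) := by
  have h := map_pow (Complex.ofRealHom.mapMatrix (m := Fin p)) N k
  simp only [RingHom.mapMatrix_apply] at h
  exact h.symm

/-- If `N` is nonnegative and `N w < w` for some positive `w`, then `specRad N < 1`. -/
private lemma specRad_lt_one_of {p : ℕ} {N : Matrix (Fin p) (Fin p) ℝ}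
    (hN : ∀ i j, 0 ≤ N i j) {w : Fin p → ℝ} (hw : ∀ i, 0 < w i)
    (hlt : ∀ i, N.mulVec w i < w i) : specRad N < 1 := by
  rcases Nat.eq_zero_or_pos p with hp | hp
  · subst hp
    haveI : Subsingleton (Matrix (Fin 0) (Fin 0) ℂ) :=
      ⟨fun a b => by ext i; exact i.elim0⟩
    have hs : spectrum ℂ (N.map (fun x : ℝ => (x : ℂ))) = ∅ := by
      ext z
      simp [spectrum.mem_iff, isUnit_of_subsingleton]
    show (spectralRadius ℂ (N.map (fun x : ℝ => (x : ℂ)))).toReal < 1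
    rw [spectralRadius, hs]
    simp
  · haveI : Nonempty (Fin p) := Fin.pos_iff_nonempty.mp hp
    set M : Matrix (Fin p) (Fin p) ℂ := N.map (fun x : ℝ => (x : ℂ)) with hM
    set c : ℝ := Finset.univ.sup' Finset.univ_nonempty (fun j => N.mulVec w j / w j) with hc
    have hc1 : c < 1 := by
      rw [hc, Finset.sup'_lt_iff]
      exact fun j _ => (div_lt_one (hw j)).mpr (hlt j)
    have hc0 : 0 ≤ c := by
      obtain ⟨j⟩ := ‹Nonempty (Fin p)›
      exact le_trans (div_nonneg (mulVec_nonneg' hN (fun i => (hw i).le) j) (hw j).le)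
        (Finset.le_sup' (f := fun j => N.mulVec w j / w j) (Finset.mem_univ j))
    have hcw : ∀ j, N.mulVec w j ≤ c * w j := by
      intro j
      have h1 : N.mulVec w j / w j ≤ c :=
        Finset.le_sup' (fun j => N.mulVec w j / w j) (Finset.mem_univ j)
      calc N.mulVec w j = (N.mulVec w j / w j) * w j :=
            (div_mul_cancel₀ _ (hw j).ne').symm
        _ ≤ c * w j := mul_le_mul_of_nonneg_right h1 (hw j).le
    have key : ∀ z ∈ spectrum ℂ M, ‖z‖ ≤ c := by
      intro z hz
      rw [spectrum.mem_iff, Matrix.isUnit_iff_isUnit_det, isUnit_iff_ne_zero, not_not] at hz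
      obtain ⟨x, hx0, hx⟩ := (Matrix.exists_mulVec_eq_zero_iff).mpr hz
      have hxe : M.mulVec x = z • x := by
        funext i
        have hxi := congrFun hx i
        rw [Matrix.sub_mulVec] at hxi
        have h1 : ((algebraMap ℂ (Matrix (Fin p) (Fin p) ℂ) z).mulVec x) i = z * x i := by
          rw [Matrix.algebraMap_eq_diagonal, Matrix.mulVec_diagonal]
          simp
        simp only [Pi.sub_apply, h1, Pi.zero_apply] at hxi
        simp only [Pi.smul_apply, smul_eq_mul]
        linear_combination -hxi
      set t : ℝ := Finset.univ.sup' Finset.univ_nonempty (fun j => ‖x j‖ / w j) with ht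
      obtain ⟨j₀, _, hj₀⟩ :=
        Finset.exists_mem_eq_sup' Finset.univ_nonempty (fun j => ‖x j‖ / w j)
      have htx : ∀ k, ‖x k‖ ≤ t * w k := by
        intro k
        have := Finset.le_sup' (fun j => ‖x j‖ / w j) (Finset.mem_univ k)
        calc ‖x k‖ = (‖x k‖ / w k) * w k := (div_mul_cancel₀ _ (hw k).ne').symm
          _ ≤ t * w k := mul_le_mul_of_nonneg_right this (hw k).le
      have hxj₀ : ‖x j₀‖ = t * w j₀ := by
        rw [ht, hj₀, div_mul_cancel₀ _ (hw j₀).ne']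
      have htpos : 0 < t := by
        obtain ⟨j₁, hj₁⟩ := Function.ne_iff.mp hx0
        have : 0 < ‖x j₁‖ / w j₁ := div_pos (norm_pos_iff.mpr hj₁) (hw j₁)
        exact lt_of_lt_of_le this (Finset.le_sup' (f := fun j => ‖x j‖ / w j) (Finset.mem_univ j₁))
      have hchain : ‖z‖ * (t * w j₀) ≤ c * (t * w j₀) := by
        calc ‖z‖ * (t * w j₀) = ‖z‖ * ‖x j₀‖ := by rw [hxj₀]
          _ = ‖z * x j₀‖ := (norm_mul z (x j₀)).symm
          _ = ‖(M.mulVec x) j₀‖ := by rw [hxe]; simp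
          _ = ‖∑ k, ((N j₀ k : ℝ) : ℂ) * x k‖ := by
              simp [Matrix.mulVec, dotProduct, hM, Matrix.map_apply]
          _ ≤ ∑ k, ‖((N j₀ k : ℝ) : ℂ) * x k‖ := norm_sum_le _ _
          _ = ∑ k, N j₀ k * ‖x k‖ := by
              refine Finset.sum_congr rfl fun k _ => ?_
              rw [norm_mul, Complex.norm_real, Real.norm_eq_abs, abs_of_nonneg (hN j₀ k)]
          _ ≤ ∑ k, N j₀ k * (t * w k) := by
              refine Finset.sum_le_sum fun k _ => ?_
              exact mul_le_mul_of_nonneg_left (htx k) (hN j₀ k)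
          _ = t * N.mulVec w j₀ := by
              simp only [Matrix.mulVec, dotProduct, Finset.mul_sum]
              refine Finset.sum_congr rfl fun k _ => by ring
          _ ≤ t * (c * w j₀) := mul_le_mul_of_nonneg_left (hcw j₀) htpos.le
          _ = c * (t * w j₀) := by ring
      exact le_of_mul_le_mul_right hchain (mul_pos htpos (hw j₀))
    have hsr : spectralRadius ℂ M ≤ ENNReal.ofReal c := by
      rw [spectralRadius]
      refine iSup₂_le fun z hz => ?_
      rw [← ENNReal.ofReal_coe_nnreal]
      exact ENNReal.ofReal_le_ofReal (key z hz)
    have hfin : specRad N ≤ c := by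
      show (spectralRadius ℂ M).toReal ≤ c
      calc (spectralRadius ℂ M).toReal ≤ (ENNReal.ofReal c).toReal :=
            ENNReal.toReal_mono ENNReal.ofReal_ne_top hsr
        _ = c := ENNReal.toReal_ofReal hc0
    linarith

/-- If `specRad N < 1` for nonnegative `N`, there is a positive `w` with `N w < w`. -/
private lemma exists_vec_of_specRad_lt_one {p : ℕ} {N : Matrix (Fin p) (Fin p) ℝ}
    (hN : ∀ i j, 0 ≤ N i j) (h : specRad N < 1) :
    ∃ w : Fin p → ℝ, (∀ i, 0 < w i) ∧ ∀ i, N.mulVec w i < w i := by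
  rcases Nat.eq_zero_or_pos p with hp | hp
  · subst hp
    exact ⟨fun _ => 1, fun i => i.elim0, fun i => i.elim0⟩
  haveI : Nonempty (Fin p) := Fin.pos_iff_nonempty.mp hp
  set M : Matrix (Fin p) (Fin p) ℂ := N.map (fun x : ℝ => (x : ℂ)) with hM
  haveI : CompleteSpace (Matrix (Fin p) (Fin p) ℂ) := FiniteDimensional.complete ℂ _
  have hρ : spectralRadius ℂ M < 1 := by
    have hne : spectralRadius ℂ M ≠ ⊤ :=
      ((spectrum.spectralRadius_le_nnnorm (𝕜 := ℂ) M).trans_lt ENNReal.coe_lt_top).ne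
    have h'' : (spectralRadius ℂ M).toReal < 1 := h
    have h' : (spectralRadius ℂ M).toReal < (1 : ℝ≥0∞).toReal := by
      simpa using h''
    exact (ENNReal.toReal_lt_toReal hne ENNReal.one_ne_top).mp h'
  have hG := spectrum.pow_nnnorm_pow_one_div_tendsto_nhds_spectralRadius M
  have hev : ∀ᶠ n : ℕ in atTop, ((‖M ^ n‖₊ : ℝ≥0∞) ^ (1 / (n : ℝ))) < 1 :=
    hG.eventually_lt_const hρ
  obtain ⟨K, hK1, hKlt⟩ : ∃ K : ℕ, 1 ≤ K ∧ ((‖M ^ K‖₊ : ℝ≥0∞) ^ (1 / (K : ℝ))) < 1 := by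
    obtain ⟨K, hK⟩ := ((eventually_ge_atTop 1).and hev).exists
    exact ⟨K, hK.1, hK.2⟩
  have hKpos : (0 : ℝ) < 1 / (K : ℝ) := by
    have : (0:ℝ) < (K:ℝ) := by exact_mod_cast hK1
    positivity
  have hnormK : ‖M ^ K‖₊ < 1 := by
    by_contra hcon
    push_neg at hcon
    have h1 : (1 : ℝ≥0∞) ≤ (‖M ^ K‖₊ : ℝ≥0∞) ^ (1 / (K : ℝ)) := by
      calc (1 : ℝ≥0∞) = (1 : ℝ≥0∞) ^ (1 / (K : ℝ)) := (ENNReal.one_rpow _).symm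
        _ ≤ (‖M ^ K‖₊ : ℝ≥0∞) ^ (1 / (K : ℝ)) :=
            ENNReal.rpow_le_rpow (by exact_mod_cast hcon) hKpos.le
    exact absurd hKlt (not_lt.mpr h1)
  have hMK : M ^ K = (N ^ K).map (fun x : ℝ => (x : ℂ)) := by
    rw [hM]
    exact map_pow' N K
  have hrow : ∀ i, (N ^ K).mulVec (fun _ => 1) i < 1 := by
    intro i
    have h1 : ∑ j, ‖(M ^ K) i j‖₊ ≤ ‖M ^ K‖₊ := by
      rw [Matrix.linfty_opNNNorm_def]
      exact Finset.le_sup (f := fun i => ∑ j, ‖(M ^ K) i j‖₊) (Finset.mem_univ i)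
    have h2 : ∑ j, ‖(M ^ K) i j‖₊ < 1 := lt_of_le_of_lt h1 hnormK
    have h3 : ∑ j, ‖(M ^ K) i j‖ < 1 := by
      have h2' := (NNReal.coe_lt_coe (r₂ := 1)).mpr h2
      push_cast at h2'
      simpa using h2'
    have h4 : ∀ j, ‖(M ^ K) i j‖ = (N ^ K) i j := by
      intro j
      rw [hMK, Matrix.map_apply, Complex.norm_real, Real.norm_eq_abs,
        abs_of_nonneg (pow_entry_nonneg hN K i j)]
    calc (N ^ K).mulVec (fun _ => 1) i = ∑ j, (N ^ K) i j := by
          simp [Matrix.mulVec, dotProduct]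
      _ = ∑ j, ‖(M ^ K) i j‖ := by
          exact (Finset.sum_congr rfl fun j _ => (h4 j)).symm
      _ < 1 := h3
  set v : ℕ → Fin p → ℝ := fun k => (N ^ k).mulVec (fun _ => 1) with hv
  set w : Fin p → ℝ := fun i => ∑ k ∈ Finset.range K, v k i with hw
  have hv0 : ∀ k i, 0 ≤ v k i := fun k i =>
    mulVec_nonneg' (pow_entry_nonneg hN k) (fun _ => zero_le_one) i
  have hv01 : ∀ i, v 0 i = 1 := by
    intro i
    simp [hv, Matrix.one_mulVec]
  have hw1 : ∀ i, 1 ≤ w i := by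
    intro i
    calc (1 : ℝ) = v 0 i := (hv01 i).symm
      _ ≤ w i := Finset.single_le_sum (f := fun k => v k i) (fun k _ => hv0 k i)
            (Finset.mem_range.mpr hK1)
  have hNw : ∀ i, N.mulVec w i = w i - 1 + v K i := by
    intro i
    have h1 : N.mulVec w i = ∑ k ∈ Finset.range K, v (k + 1) i := by
      have h2 : ∀ k, N.mulVec (v k) i = v (k + 1) i := by
        intro k
        rw [hv]
        show (N *ᵥ ((N ^ k) *ᵥ fun _ => 1)) i = _
        rw [Matrix.mulVec_mulVec, ← pow_succ']
      calc N.mulVec w i = ∑ j, N i j * ∑ k ∈ Finset.range K, v k j := rfl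
        _ = ∑ j, ∑ k ∈ Finset.range K, N i j * v k j := by
            refine Finset.sum_congr rfl fun j _ => Finset.mul_sum _ _ _
        _ = ∑ k ∈ Finset.range K, ∑ j, N i j * v k j := Finset.sum_comm
        _ = ∑ k ∈ Finset.range K, v (k + 1) i :=
            Finset.sum_congr rfl fun k _ => h2 k
    have h3 : ∑ k ∈ Finset.range (K + 1), v k i
        = (∑ k ∈ Finset.range K, v (k + 1) i) + v 0 i := Finset.sum_range_succ' _ _
    have h4 : ∑ k ∈ Finset.range (K + 1), v k i = w i + v K i := Finset.sum_range_succ _ _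
    rw [h1]
    have := hv01 i
    linarith
  refine ⟨w, fun i => lt_of_lt_of_le one_pos (hw1 i), fun i => ?_⟩
  rw [hNw i]
  have := hrow i
  show _ < w i
  rw [hv] at *
  linarith [this]

end Aux

theorem stmt9 {p m : ℕ} (G₁ : Matrix (Fin p) (Fin m) ℝ) (G₂ : Matrix (Fin m) (Fin p) ℝ)
    (hG₁ : ∀ i j, 0 ≤ G₁ i j) (hG₂ : ∀ i j, 0 ≤ G₂ i j) :
    specRad (G₁ * G₂) < 1 ↔
      ∃ (π₁ : Fin m → ℝ) (π₂ : Fin p → ℝ), (∀ i, 0 < π₁ i) ∧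
        (∀ j, 0 ≤ π₁ j + G₂.mulVec π₂ j) ∧ (∀ j, G₁.mulVec π₁ j + π₂ j < 0) := by
  have hprod : ∀ i j, 0 ≤ (G₁ * G₂) i j := by
    intro i j
    rw [Matrix.mul_apply]
    exact Finset.sum_nonneg fun k _ => mul_nonneg (hG₁ i k) (hG₂ k j)
  constructor
  · intro h
    rcases Nat.eq_zero_or_pos p with hp | hp
    · subst hp
      refine ⟨fun _ => 1, fun j => j.elim0, fun i => one_pos, fun j => ?_, fun j => j.elim0⟩
      have : G₂.mulVec (fun j => j.elim0) j = 0 := by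
        simp [Matrix.mulVec, dotProduct]
      rw [this]; norm_num
    haveI : Nonempty (Fin p) := Fin.pos_iff_nonempty.mp hp
    obtain ⟨w, hwpos, hwlt⟩ := exists_vec_of_specRad_lt_one hprod h
    set ε : ℝ := Finset.univ.inf' Finset.univ_nonempty
      (fun j => (w j - (G₁ * G₂).mulVec w j) / (G₁.mulVec (fun _ => 1) j + 1)) with hε
    have hden : ∀ j, 0 < G₁.mulVec (fun _ => 1) j + 1 := by
      intro j
      have := mulVec_nonneg' hG₁ (fun _ => zero_le_one) j
      linarith
    have hεpos : 0 < ε := by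
      rw [hε, Finset.lt_inf'_iff]
      intro j _
      exact div_pos (by linarith [hwlt j]) (hden j)
    have hεle : ∀ j, ε * (G₁.mulVec (fun _ => 1) j + 1) ≤ w j - (G₁ * G₂).mulVec w j := by
      intro j
      have h1 : ε ≤ (w j - (G₁ * G₂).mulVec w j) / (G₁.mulVec (fun _ => 1) j + 1) :=
        Finset.inf'_le _ (Finset.mem_univ j)
      exact (le_div_iff₀ (hden j)).mp h1
    refine ⟨fun i => G₂.mulVec w i + ε, fun j => -(w j), ?_, ?_, ?_⟩
    · intro i
      show 0 < G₂.mulVec w i + ε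
      have := mulVec_nonneg' hG₂ (fun k => (hwpos k).le) i
      linarith
    · intro j
      have hneg : G₂.mulVec (fun k => -(w k)) j = -G₂.mulVec w j := by
        show G₂.mulVec (-w) j = _
        rw [Matrix.mulVec_neg]
        rfl
      simp only [hneg]
      linarith [hεpos]
    · intro j
      have hsplit : G₁.mulVec (fun i => G₂.mulVec w i + ε) j
          = G₁.mulVec (G₂.mulVec w) j + ε * G₁.mulVec (fun _ => 1) j := by
        have heq : (fun i => G₂.mulVec w i + ε) = G₂.mulVec w + ε • (fun _ => (1 : ℝ)) := by
          funext i; simp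
        rw [heq, Matrix.mulVec_add, Matrix.mulVec_smul]
        simp
      have hcomp : G₁.mulVec (G₂.mulVec w) j = (G₁ * G₂).mulVec w j := by
        rw [Matrix.mulVec_mulVec]
      have h1 := hεle j
      have h2 : ε * (G₁.mulVec (fun _ => 1) j + 1)
          = ε * G₁.mulVec (fun _ => 1) j + ε := by ring
      simp only [hsplit, hcomp]
      linarith
  · rintro ⟨π₁, π₂, hπ₁, h2, h3⟩
    have hG₁π : ∀ j, 0 ≤ G₁.mulVec π₁ j := fun j =>
      mulVec_nonneg' hG₁ (fun i => (hπ₁ i).le) j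
    have hwpos : ∀ j, 0 < -π₂ j := by
      intro j
      have := h3 j
      have := hG₁π j
      linarith
    refine specRad_lt_one_of hprod (w := fun j => -π₂ j) hwpos ?_
    intro j
    have hstep : ∀ i, G₂.mulVec (fun k => -π₂ k) i ≤ π₁ i := by
      intro i
      have hne : G₂.mulVec (fun k => -π₂ k) i = -(G₂.mulVec π₂ i) := by
        show G₂.mulVec (-π₂) i = _
        rw [Matrix.mulVec_neg]
        rfl
      rw [hne]
      have := h2 i
      linarith
    have hcomp : (G₁ * G₂).mulVec (fun k => -π₂ k) j
        = G₁.mulVec (G₂.mulVec (fun k => -π₂ k)) j := by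
      rw [Matrix.mulVec_mulVec]
    show (G₁ * G₂).mulVec (fun k => -π₂ k) j < -π₂ j
    rw [hcomp]
    calc G₁.mulVec (G₂.mulVec (fun k => -π₂ k)) j ≤ G₁.mulVec π₁ j := mulVec_mono' hG₁ hstep j
      _ < -π₂ j := by have := h3 j; linarith
end

section
/- Let G₁ ∈ ℝ^{p×m}_{≥0} and G₂ ∈ ℝ^{m×p}_{≥0} be nonnegative matrices. If there exist symmetric positive definite matrices Q₁ ∈ 𝕊^{p} and Q₂ ∈ 𝕊^{m} with G₁ᵀQ₁G₁ − Q₂ ≺ 0 and G₂ᵀQ₂G₂ − Q₁ ≺ 0, then ρ(G₁G₂) < 1. -/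
open Matrix

lemma re_quad {n : Type*} [Fintype n] (M : Matrix n n ℝ) (v : n → ℂ) :
    (star v ⬝ᵥ (M.map (fun x => (x : ℂ))) *ᵥ v).re
      = (fun i => (v i).re) ⬝ᵥ M *ᵥ (fun i => (v i).re)
        + (fun i => (v i).im) ⬝ᵥ M *ᵥ (fun i => (v i).im) := by
  simp only [dotProduct, mulVec, Matrix.map_apply, Pi.star_apply, Finset.mul_sum,
    Complex.re_sum, ← Finset.sum_add_distrib]
  refine Finset.sum_congr rfl fun i _ => Finset.sum_congr rfl fun j _ => ?_
  simp [Complex.mul_re, Complex.mul_im]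

lemma pos_re_quad {n : Type*} [Fintype n] {M : Matrix n n ℝ} (hM : M.PosDef)
    {v : n → ℂ} (hv : v ≠ 0) :
    0 < (star v ⬝ᵥ (M.map (fun x => (x : ℂ))) *ᵥ v).re := by
  rw [re_quad]
  set a : n → ℝ := fun i => (v i).re
  set b : n → ℝ := fun i => (v i).im
  have hab : a ≠ 0 ∨ b ≠ 0 := by
    by_contra h
    push_neg at h
    apply hv
    funext i
    have ha := congrFun h.1 i
    have hb := congrFun h.2 i
    simp only [a, b, Pi.zero_apply] at ha hb
    exact Complex.ext ha hb
  rcases hab with h | h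
  · exact add_pos_of_pos_of_nonneg (by simpa using hM.dotProduct_mulVec_pos h) (by simpa using hM.posSemidef.dotProduct_mulVec_nonneg b)
  · exact add_pos_of_nonneg_of_pos (by simpa using hM.posSemidef.dotProduct_mulVec_nonneg a) (by simpa using hM.dotProduct_mulVec_pos h)

lemma stein {n : Type*} [Fintype n] [DecidableEq n] {A Q : Matrix n n ℝ}
    (hQ : Q.PosDef) (h : (Q - Aᵀ * Q * A).PosDef) {lam : ℂ}
    (hlam : lam ∈ spectrum ℂ (A.map (fun x => (x : ℂ)))) : ‖lam‖ < 1 := by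
  set Ac := A.map (fun x : ℝ => (x : ℂ)) with hAc
  set Qc := Q.map (fun x : ℝ => (x : ℂ)) with hQc
  rw [spectrum.mem_iff, Matrix.isUnit_iff_isUnit_det, isUnit_iff_ne_zero, not_not] at hlam
  obtain ⟨v, hv, hv0⟩ := (Matrix.exists_mulVec_eq_zero_iff).mpr hlam
  have heig : Ac *ᵥ v = lam • v := by
    rw [sub_mulVec] at hv0
    have h1 : (algebraMap ℂ (Matrix n n ℂ)) lam *ᵥ v = lam • v := by
      funext i; simp [Matrix.algebraMap_eq_diagonal, mulVec_diagonal, Pi.smul_apply]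
    rw [h1, sub_eq_zero] at hv0
    exact hv0.symm
  have hmap : (Q - Aᵀ * Q * A).map (fun x : ℝ => (x : ℂ)) = Qc - Acᵀ * Qc * Ac := by
    have h2 : (fun x : ℝ => (x : ℂ)) = ⇑(algebraMap ℝ ℂ) := rfl
    rw [hQc, hAc, h2, Matrix.map_sub _ (fun a b => map_sub (algebraMap ℝ ℂ) a b),
      Matrix.map_mul, Matrix.map_mul, Matrix.transpose_map]
  have hpos := pos_re_quad h hv
  rw [hmap] at hpos
  have hAH : Acᴴ = Acᵀ := by
    funext i j
    simp [hAc, conjTranspose_apply, Complex.conj_ofReal]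
  have key : star v ⬝ᵥ (Acᵀ * Qc * Ac) *ᵥ v
      = Complex.normSq lam * (star v ⬝ᵥ Qc *ᵥ v) := by
    rw [← mulVec_mulVec, ← mulVec_mulVec]
    rw [dotProduct_mulVec, ← hAH, ← star_mulVec, heig]
    rw [mulVec_smul, star_smul, smul_dotProduct, dotProduct_smul]
    rw [smul_eq_mul, smul_eq_mul, ← mul_assoc]
    rw [RCLike.star_def, mul_comm ((starRingEnd ℂ) lam) lam, Complex.mul_conj]
  have hre : (star v ⬝ᵥ (Acᵀ * Qc * Ac) *ᵥ v).re
      = Complex.normSq lam * (star v ⬝ᵥ Qc *ᵥ v).re := by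
    rw [key]
    simp [Complex.re_ofReal_mul]
  have hQpos : 0 < (star v ⬝ᵥ Qc *ᵥ v).re := pos_re_quad hQ hv
  rw [sub_mulVec, dotProduct_sub, Complex.sub_re, hre] at hpos
  have hns : Complex.normSq lam < 1 := by nlinarith
  have : ‖lam‖ ^ 2 < 1 := by rwa [← Complex.sq_norm] at hns
  nlinarith [norm_nonneg lam]

lemma specRad_lt_one'_s10 {n : Type*} [Fintype n] [DecidableEq n] (M : Matrix n n ℂ)
    (h : ∀ lam ∈ spectrum ℂ M, ‖lam‖ < 1) : (spectralRadius ℂ M).toReal < 1 := by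
  have hfin : (spectrum ℂ M).Finite := Matrix.finite_spectrum M
  set t : NNReal := hfin.toFinset.sup (fun lam => ‖lam‖₊) with ht
  have hle : spectralRadius ℂ M ≤ (t : ENNReal) := by
    rw [spectralRadius]
    refine iSup₂_le fun lam hlam => ?_
    exact_mod_cast ENNReal.coe_le_coe.mpr (Finset.le_sup (hfin.mem_toFinset.mpr hlam))
  have ht1 : t < 1 := by
    rw [ht]
    refine Finset.sup_lt_iff (by norm_num) |>.mpr fun lam hlam => ?_
    have := h lam (hfin.mem_toFinset.mp hlam)
    rwa [← NNReal.coe_lt_coe, coe_nnnorm, NNReal.coe_one]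
  have hlt : spectralRadius ℂ M < 1 :=
    lt_of_le_of_lt hle (by exact_mod_cast ENNReal.coe_lt_coe.mpr ht1)
  have hne : spectralRadius ℂ M ≠ ⊤ := ne_top_of_lt hlt
  have := ENNReal.toReal_lt_toReal hne (by norm_num : (1 : ENNReal) ≠ ⊤) |>.mpr hlt
  simpa using this

theorem stmt10 {p m : ℕ} (G₁ : Matrix (Fin p) (Fin m) ℝ) (G₂ : Matrix (Fin m) (Fin p) ℝ)
    (hG₁ : ∀ i j, 0 ≤ G₁ i j) (hG₂ : ∀ i j, 0 ≤ G₂ i j)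
    (Q₁ : Matrix (Fin p) (Fin p) ℝ) (Q₂ : Matrix (Fin m) (Fin m) ℝ)
    (hQ₁ : Q₁.PosDef) (hQ₂ : Q₂.PosDef)
    (h₁ : NegDef (G₁ᵀ * Q₁ * G₁ - Q₂)) (h₂ : NegDef (G₂ᵀ * Q₂ * G₂ - Q₁)) :
    specRad (G₁ * G₂) < 1 := by
  have hpd : (Q₁ - (G₁ * G₂)ᵀ * Q₁ * (G₁ * G₂)).PosDef := by
    have he : Q₁ - (G₁ * G₂)ᵀ * Q₁ * (G₁ * G₂)
        = (-(G₂ᵀ * Q₂ * G₂ - Q₁)) + G₂ᵀ * (-(G₁ᵀ * Q₁ * G₁ - Q₂)) * G₂ := by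
      have h3 : G₂ᵀ * (-(G₁ᵀ * Q₁ * G₁ - Q₂)) * G₂
          = G₂ᵀ * Q₂ * G₂ - (G₁ * G₂)ᵀ * Q₁ * (G₁ * G₂) := by
        rw [transpose_mul]
        rw [neg_sub, Matrix.mul_sub, Matrix.sub_mul]
        simp [Matrix.mul_assoc]
      rw [h3, neg_sub]
      abel
    rw [he]
    refine Matrix.PosDef.add_posSemidef h₂ ?_
    have := h₁.posSemidef.conjTranspose_mul_mul_same G₂
    rwa [conjTranspose_eq_transpose_of_trivial] at this
  exact specRad_lt_one'_s10 _ (fun lam hlam => stein hQ₁ hpd hlam)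
end

section
/- Let G₁ ∈ ℝ^{p×m}_{≥0} and G₂ ∈ ℝ^{m×p}_{≥0} be nonnegative matrices with ρ(G₁G₂) < 1. Then there exist symmetric positive definite matrices Q₁, Q₂ such that G₁ᵀQ₁G₁ − Q₂ ≺ 0 and G₂ᵀQ₂G₂ − Q₁ ≺ 0. -/
set_option maxHeartbeats 2000000

open Matrix

private lemma psd_tmul {a b : ℕ} (M : Matrix (Fin a) (Fin b) ℝ) : (Mᵀ * M).PosSemidef :=
  (Matrix.conjTranspose_eq_transpose_of_trivial M) ▸ Matrix.posSemidef_conjTranspose_mul_self M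

private lemma pow_mul_comm_aux {a b : ℕ} (A : Matrix (Fin a) (Fin b) ℝ)
    (B : Matrix (Fin b) (Fin a) ℝ) (n : ℕ) : (A * B) ^ n * A = A * (B * A) ^ n := by
  induction n with
  | zero => simp
  | succ k ih =>
    rw [pow_succ, pow_succ, Matrix.mul_assoc ((A * B) ^ k) (A * B) A,
      Matrix.mul_assoc A B A, ← Matrix.mul_assoc ((A * B) ^ k) A (B * A), ih,
      Matrix.mul_assoc]

private lemma entry_mul_le_right {a b c : ℕ} (X : Matrix (Fin a) (Fin b) ℝ)
    (A : Matrix (Fin b) (Fin c) ℝ) {δ : ℝ} (hδ : 0 ≤ δ) (hX : ∀ i j, |X i j| ≤ δ)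
    (i : Fin a) (j : Fin c) : |(X * A) i j| ≤ δ * ∑ i', ∑ j', |A i' j'| := by
  calc |(X * A) i j| ≤ ∑ k, |X i k * A k j| := by
        rw [Matrix.mul_apply]; exact Finset.abs_sum_le_sum_abs _ _
    _ ≤ ∑ k, δ * |A k j| := Finset.sum_le_sum fun k _ => by
        rw [abs_mul]; exact mul_le_mul_of_nonneg_right (hX i k) (abs_nonneg _)
    _ = δ * ∑ k, |A k j| := by rw [Finset.mul_sum]
    _ ≤ δ * ∑ i', ∑ j', |A i' j'| := by
        apply mul_le_mul_of_nonneg_left _ hδ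
        exact Finset.sum_le_sum fun k _ =>
          Finset.single_le_sum (f := fun j' => |A k j'|)
            (fun j' _ => abs_nonneg _) (Finset.mem_univ j)

private lemma entry_mul_le_left {a b c : ℕ} (A : Matrix (Fin a) (Fin b) ℝ)
    (X : Matrix (Fin b) (Fin c) ℝ) {δ : ℝ} (hδ : 0 ≤ δ) (hX : ∀ i j, |X i j| ≤ δ)
    (i : Fin a) (j : Fin c) : |(A * X) i j| ≤ (∑ i', ∑ j', |A i' j'|) * δ := by
  calc |(A * X) i j| ≤ ∑ k, |A i k * X k j| := by
        rw [Matrix.mul_apply]; exact Finset.abs_sum_le_sum_abs _ _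
    _ ≤ ∑ k, |A i k| * δ := Finset.sum_le_sum fun k _ => by
        rw [abs_mul]; exact mul_le_mul_of_nonneg_left (hX k j) (abs_nonneg _)
    _ = (∑ k, |A i k|) * δ := by rw [Finset.sum_mul]
    _ ≤ (∑ i', ∑ j', |A i' j'|) * δ := by
        apply mul_le_mul_of_nonneg_right _ hδ
        exact Finset.single_le_sum (f := fun i' => ∑ j', |A i' j'|)
          (fun i' _ => Finset.sum_nonneg fun j' _ => abs_nonneg _) (Finset.mem_univ i)

private lemma mulVec_dot_le {a b : ℕ} (A : Matrix (Fin a) (Fin b) ℝ) {ε : ℝ}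
    (h : ∀ i j, |A i j| ≤ ε) (x : Fin b → ℝ) :
    (A *ᵥ x) ⬝ᵥ (A *ᵥ x) ≤ ((a : ℝ) * b * ε ^ 2) * (x ⬝ᵥ x) := by
  have key : ∀ i : Fin a, (A *ᵥ x) i * (A *ᵥ x) i ≤ (b : ℝ) * ε ^ 2 * (x ⬝ᵥ x) := by
    intro i
    have h1 : |(A *ᵥ x) i| ≤ ε * ∑ j, |x j| := by
      calc |(A *ᵥ x) i| ≤ ∑ j, |A i j * x j| := by
            rw [Matrix.mulVec, dotProduct]; exact Finset.abs_sum_le_sum_abs _ _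
        _ ≤ ∑ j, ε * |x j| := Finset.sum_le_sum fun j _ => by
            rw [abs_mul]; exact mul_le_mul_of_nonneg_right (h i j) (abs_nonneg _)
        _ = ε * ∑ j, |x j| := by rw [Finset.mul_sum]
    have h2 : (∑ j, |x j|) ^ 2 ≤ (b : ℝ) * (x ⬝ᵥ x) := by
      have := sq_sum_le_card_mul_sum_sq (s := (Finset.univ : Finset (Fin b)))
        (f := fun j => |x j|)
      simpa [dotProduct, sq_abs, Finset.card_univ, sq] using this
    calc (A *ᵥ x) i * (A *ᵥ x) i = |(A *ᵥ x) i| ^ 2 := by rw [sq_abs, sq]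
      _ ≤ (ε * ∑ j, |x j|) ^ 2 := by
          apply pow_le_pow_left₀ (abs_nonneg _) h1
      _ = ε ^ 2 * (∑ j, |x j|) ^ 2 := by ring
      _ ≤ ε ^ 2 * ((b : ℝ) * (x ⬝ᵥ x)) := by
          exact mul_le_mul_of_nonneg_left h2 (by positivity)
      _ = (b : ℝ) * ε ^ 2 * (x ⬝ᵥ x) := by ring
  calc (A *ᵥ x) ⬝ᵥ (A *ᵥ x) = ∑ i, (A *ᵥ x) i * (A *ᵥ x) i := rfl
    _ ≤ ∑ _i : Fin a, (b : ℝ) * ε ^ 2 * (x ⬝ᵥ x) := Finset.sum_le_sum fun i _ => key i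
    _ = ((a : ℝ) * b * ε ^ 2) * (x ⬝ᵥ x) := by
        rw [Finset.sum_const, Finset.card_univ, Fintype.card_fin, nsmul_eq_mul]; ring

private lemma negdef_of_small {q : ℕ} (A : Matrix (Fin q) (Fin q) ℝ) {ε : ℝ}
    (hsmall : ∀ i j, |A i j| ≤ ε) (hq : (q : ℝ) * q * ε ^ 2 < 1) :
    NegDef (Aᵀ * A - 1) := by
  rw [NegDef, neg_sub]
  refine Matrix.PosDef.of_dotProduct_mulVec_pos (Matrix.isHermitian_one.sub (psd_tmul A).isHermitian) fun x hx => ?_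
  have hsx : star x = x := by simp
  rw [hsx, Matrix.sub_mulVec, dotProduct_sub, Matrix.one_mulVec]
  have hquad : x ⬝ᵥ ((Aᵀ * A) *ᵥ x) = (A *ᵥ x) ⬝ᵥ (A *ᵥ x) := by
    rw [← Matrix.mulVec_mulVec, Matrix.dotProduct_mulVec, Matrix.vecMul_transpose]
  rw [hquad]
  have hxx : 0 < x ⬝ᵥ x := by
    have := Matrix.dotProduct_star_self_pos_iff (R := ℝ) (v := x) |>.mpr hx
    simpa using this
  have hb := mulVec_dot_le A hsmall x
  have : ((q : ℝ) * q * ε ^ 2) * (x ⬝ᵥ x) < 1 * (x ⬝ᵥ x) :=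
    mul_lt_mul_of_pos_right hq hxx
  linarith

private lemma posDef_Q {q r : ℕ} (A : Matrix (Fin q) (Fin q) ℝ) (G : Matrix (Fin r) (Fin q) ℝ)
    (N : ℕ) :
    (∑ j ∈ Finset.range (N + 1),
      ((A ^ j)ᵀ * A ^ j + (G * A ^ j)ᵀ * (G * A ^ j))).PosDef := by
  rw [Finset.sum_range_succ']
  have hS : (∑ j ∈ Finset.range N,
      ((A ^ (j+1))ᵀ * A ^ (j+1) + (G * A ^ (j+1))ᵀ * (G * A ^ (j+1)))).PosSemidef := by
    apply Finset.sum_induction _ _ (fun a b ha hb => ha.add hb) Matrix.PosSemidef.zero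
    exact fun j _ => (psd_tmul (A ^ (j+1))).add (psd_tmul (G * A ^ (j+1)))
  have h0 : ((A ^ 0)ᵀ * A ^ 0 + (G * A ^ 0)ᵀ * (G * A ^ 0)) =
      1 + Gᵀ * G := by simp
  rw [h0]
  exact Matrix.PosDef.posSemidef_add hS (Matrix.PosDef.one.add_posSemidef (psd_tmul G))

private lemma lyap_identity {a b : ℕ} (G₁ : Matrix (Fin a) (Fin b) ℝ)
    (G₂ : Matrix (Fin b) (Fin a) ℝ) (N : ℕ) :
    G₁ᵀ * (∑ j ∈ Finset.range N,
        (((G₁ * G₂) ^ j)ᵀ * (G₁ * G₂) ^ j +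
          (G₂ * (G₁ * G₂) ^ j)ᵀ * (G₂ * (G₁ * G₂) ^ j))) * G₁
      - (∑ j ∈ Finset.range N,
        (((G₂ * G₁) ^ j)ᵀ * (G₂ * G₁) ^ j +
          (G₁ * (G₂ * G₁) ^ j)ᵀ * (G₁ * (G₂ * G₁) ^ j)))
    = ((G₂ * G₁) ^ N)ᵀ * (G₂ * G₁) ^ N - 1 := by
  set H := G₁ * G₂ with hH
  set K := G₂ * G₁ with hK
  have hc : ∀ j : ℕ, H ^ j * G₁ = G₁ * K ^ j := fun j => pow_mul_comm_aux G₁ G₂ j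
  rw [Matrix.mul_sum, Matrix.sum_mul, ← Finset.sum_sub_distrib]
  have hterm : ∀ j ∈ Finset.range N,
      (G₁ᵀ * ((H ^ j)ᵀ * H ^ j + (G₂ * H ^ j)ᵀ * (G₂ * H ^ j)) * G₁
        - ((K ^ j)ᵀ * K ^ j + (G₁ * K ^ j)ᵀ * (G₁ * K ^ j)))
      = (K ^ (j+1))ᵀ * K ^ (j+1) - (K ^ j)ᵀ * K ^ j := by
    intro j _
    have e1 : G₁ᵀ * ((H ^ j)ᵀ * H ^ j) * G₁ = (G₁ * K ^ j)ᵀ * (G₁ * K ^ j) := by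
      rw [← hc j, Matrix.transpose_mul]
      simp only [Matrix.mul_assoc]
    have h2 : G₂ * (H ^ j * G₁) = K ^ (j + 1) := by
      rw [hc j, ← Matrix.mul_assoc, ← hK, ← pow_succ']
    have e2 : G₁ᵀ * ((G₂ * H ^ j)ᵀ * (G₂ * H ^ j)) * G₁ = (K ^ (j+1))ᵀ * K ^ (j+1) := by
      rw [← h2, Matrix.transpose_mul, Matrix.transpose_mul]
      simp only [Matrix.transpose_mul, Matrix.mul_assoc]
    rw [Matrix.mul_add, Matrix.add_mul, e1, e2]
    abel
  rw [Finset.sum_congr rfl hterm, Finset.sum_range_sub (fun j => (K ^ j)ᵀ * K ^ j)]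
  simp

private lemma exists_pow_entries_small {q : ℕ} (M : Matrix (Fin q) (Fin q) ℝ)
    (h : specRad M < 1) {ε : ℝ} (hε : 0 < ε) :
    ∃ N, 1 ≤ N ∧ ∀ i j, |(M ^ N) i j| ≤ ε := by
  rcases Nat.eq_zero_or_pos q with hq | hq
  · subst hq
    exact ⟨1, le_rfl, fun i => i.elim0⟩
  haveI : Nonempty (Fin q) := ⟨⟨0, hq⟩⟩
  letI : NormedRing (Matrix (Fin q) (Fin q) ℂ) := Matrix.linftyOpNormedRing
  letI : NormedAlgebra ℂ (Matrix (Fin q) (Fin q) ℂ) := Matrix.linftyOpNormedAlgebra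
  haveI : NormOneClass (Matrix (Fin q) (Fin q) ℂ) := Matrix.linfty_opNormOneClass
  haveI : CompleteSpace (Matrix (Fin q) (Fin q) ℂ) := FiniteDimensional.complete ℂ _
  set B := M.map (fun x => (x : ℂ)) with hB
  have hBpow : ∀ n : ℕ, B ^ n = (M ^ n).map (fun x => (x : ℂ)) := by
    intro n
    exact (map_pow (Complex.ofRealHom.mapMatrix (m := Fin q)) M n).symm
  have hfin : spectralRadius ℂ B ≠ ⊤ :=
    ((spectrum.spectralRadius_le_nnnorm (𝕜 := ℂ) B).trans_lt ENNReal.coe_lt_top).ne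
  have hlt : spectralRadius ℂ B < 1 := by
    rw [← ENNReal.toReal_lt_toReal hfin ENNReal.one_ne_top]
    simpa [specRad] using h
  obtain ⟨r, hr1, hr2⟩ := exists_between hlt
  have T := spectrum.pow_nnnorm_pow_one_div_tendsto_nhds_spectralRadius B
  have hev1 : ∀ᶠ n : ℕ in Filter.atTop, (‖B ^ n‖₊ : ENNReal) ^ (1 / (n : ℝ)) < r :=
    T.eventually_lt_const hr1
  have hpow : Filter.Tendsto (fun n : ℕ => r ^ n) Filter.atTop (nhds 0) :=
    ENNReal.tendsto_pow_atTop_nhds_zero_of_lt_one hr2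
  have hev2 : ∀ᶠ n : ℕ in Filter.atTop, r ^ n < ENNReal.ofReal ε :=
    hpow.eventually_lt_const (ENNReal.ofReal_pos.mpr hε)
  obtain ⟨N, hN⟩ := (hev1.and (hev2.and (Filter.eventually_ge_atTop 1))).exists
  obtain ⟨hNa, hNb, hN1⟩ := hN
  have hNne : (N : ℝ) ≠ 0 := Nat.cast_ne_zero.mpr (by omega)
  have hlt2 : (‖B ^ N‖₊ : ENNReal) < r ^ N := by
    calc (‖B ^ N‖₊ : ENNReal)
        = ((‖B ^ N‖₊ : ENNReal) ^ (1 / (N : ℝ))) ^ (N : ℝ) := by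
          rw [← ENNReal.rpow_mul, one_div, inv_mul_cancel₀ hNne, ENNReal.rpow_one]
      _ < r ^ (N : ℝ) := ENNReal.rpow_lt_rpow hNa (by positivity)
      _ = r ^ N := ENNReal.rpow_natCast r N
  have hBN : (‖B ^ N‖₊ : ENNReal) < ENNReal.ofReal ε := hlt2.trans hNb
  have hnorm : ‖B ^ N‖ ≤ ε := by
    have h2 := (ENNReal.toReal_lt_toReal ENNReal.coe_ne_top ENNReal.ofReal_ne_top).mpr hBN
    rw [ENNReal.coe_toReal, ENNReal.toReal_ofReal hε.le, coe_nnnorm] at h2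
    exact h2.le
  refine ⟨N, hN1, fun i j => ?_⟩
  have hentry : ‖(B ^ N) i j‖₊ ≤ ‖B ^ N‖₊ := by
    rw [Matrix.linfty_opNNNorm_def]
    calc ‖(B ^ N) i j‖₊ ≤ ∑ j', ‖(B ^ N) i j'‖₊ :=
          Finset.single_le_sum (f := fun j' => ‖(B ^ N) i j'‖₊)
            (fun _ _ => zero_le) (Finset.mem_univ j)
      _ ≤ _ := Finset.le_sup (f := fun i => ∑ j', ‖(B ^ N) i j'‖₊) (Finset.mem_univ i)
  have habs : |(M ^ N) i j| = ‖(B ^ N) i j‖ := by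
    rw [hBpow]
    simp [Matrix.map_apply, Complex.norm_real]
  rw [habs]
  exact le_trans (by exact_mod_cast hentry) hnorm

theorem stmt11 {p m : ℕ} (G₁ : Matrix (Fin p) (Fin m) ℝ) (G₂ : Matrix (Fin m) (Fin p) ℝ)
    (hG₁ : ∀ i j, 0 ≤ G₁ i j) (hG₂ : ∀ i j, 0 ≤ G₂ i j)
    (hρ : specRad (G₁ * G₂) < 1) :
    ∃ (Q₁ : Matrix (Fin p) (Fin p) ℝ) (Q₂ : Matrix (Fin m) (Fin m) ℝ),
      Q₁.PosDef ∧ Q₂.PosDef ∧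
      NegDef (G₁ᵀ * Q₁ * G₁ - Q₂) ∧ NegDef (G₂ᵀ * Q₂ * G₂ - Q₁) := by
  set SH := ∑ i, ∑ j, |(G₁ * G₂) i j| with hSHdef
  set S₁ := ∑ i, ∑ j, |G₁ i j| with hS₁def
  set S₂ := ∑ i, ∑ j, |G₂ i j| with hS₂def
  have hSH0 : 0 ≤ SH := Finset.sum_nonneg fun i _ => Finset.sum_nonneg fun j _ => abs_nonneg _
  have hS₁0 : 0 ≤ S₁ := Finset.sum_nonneg fun i _ => Finset.sum_nonneg fun j _ => abs_nonneg _
  have hS₂0 : 0 ≤ S₂ := Finset.sum_nonneg fun i _ => Finset.sum_nonneg fun j _ => abs_nonneg _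
  set ε₁ := (1 : ℝ) / ((p : ℝ) + 1) with hε₁def
  set ε₂ := (1 : ℝ) / ((m : ℝ) + 1) with hε₂def
  have hε₁0 : 0 < ε₁ := by positivity
  have hε₂0 : 0 < ε₂ := by positivity
  set δ := min (ε₁ / (SH + 1)) (ε₂ / (S₂ * S₁ + 1)) with hδdef
  have hδ0 : 0 < δ := lt_min (by positivity) (by positivity)
  obtain ⟨N₀, hN₀1, hs⟩ := exists_pow_entries_small (G₁ * G₂) hρ hδ0
  have hδ1 : δ * SH ≤ ε₁ := by
    calc δ * SH ≤ (ε₁ / (SH + 1)) * SH :=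
          mul_le_mul_of_nonneg_right (min_le_left _ _) hSH0
      _ ≤ ε₁ := by
          rw [div_mul_eq_mul_div, div_le_iff₀ (by positivity)]
          nlinarith
  have hδ2 : δ * (S₂ * S₁) ≤ ε₂ := by
    calc δ * (S₂ * S₁) ≤ (ε₂ / (S₂ * S₁ + 1)) * (S₂ * S₁) :=
          mul_le_mul_of_nonneg_right (min_le_right _ _) (by positivity)
      _ ≤ ε₂ := by
          rw [div_mul_eq_mul_div, div_le_iff₀ (by positivity)]
          nlinarith
  have hH : ∀ i j, |((G₁ * G₂) ^ (N₀ + 1)) i j| ≤ ε₁ := by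
    intro i j
    rw [pow_succ]
    exact le_trans (entry_mul_le_right ((G₁ * G₂) ^ N₀) (G₁ * G₂) hδ0.le hs i j) hδ1
  have hKeq : (G₂ * G₁) ^ (N₀ + 1) = (G₂ * (G₁ * G₂) ^ N₀) * G₁ := by
    rw [pow_succ', Matrix.mul_assoc, ← pow_mul_comm_aux G₁ G₂ N₀, ← Matrix.mul_assoc]
  have hK : ∀ i j, |((G₂ * G₁) ^ (N₀ + 1)) i j| ≤ ε₂ := by
    intro i j
    rw [hKeq]
    have hX : ∀ i j, |(G₂ * (G₁ * G₂) ^ N₀) i j| ≤ S₂ * δ := fun i j =>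
      entry_mul_le_left G₂ _ hδ0.le hs i j
    calc |((G₂ * (G₁ * G₂) ^ N₀) * G₁) i j| ≤ (S₂ * δ) * S₁ :=
          entry_mul_le_right _ G₁ (by positivity) hX i j
      _ = δ * (S₂ * S₁) := by ring
      _ ≤ ε₂ := hδ2
  have hqp : (p : ℝ) * p * ε₁ ^ 2 < 1 := by
    have hp : (0 : ℝ) ≤ (p : ℝ) := Nat.cast_nonneg p
    have : (p : ℝ) * p * ε₁ ^ 2 = ((p : ℝ) * p) / (((p : ℝ) + 1) ^ 2) := by
      rw [hε₁def, div_pow, one_pow, mul_one_div]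
    rw [this, div_lt_one (by positivity)]
    nlinarith
  have hqm : (m : ℝ) * m * ε₂ ^ 2 < 1 := by
    have hm : (0 : ℝ) ≤ (m : ℝ) := Nat.cast_nonneg m
    have : (m : ℝ) * m * ε₂ ^ 2 = ((m : ℝ) * m) / (((m : ℝ) + 1) ^ 2) := by
      rw [hε₂def, div_pow, one_pow, mul_one_div]
    rw [this, div_lt_one (by positivity)]
    nlinarith
  refine ⟨∑ j ∈ Finset.range (N₀ + 1),
      (((G₁ * G₂) ^ j)ᵀ * (G₁ * G₂) ^ j + (G₂ * (G₁ * G₂) ^ j)ᵀ * (G₂ * (G₁ * G₂) ^ j)),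
    ∑ j ∈ Finset.range (N₀ + 1),
      (((G₂ * G₁) ^ j)ᵀ * (G₂ * G₁) ^ j + (G₁ * (G₂ * G₁) ^ j)ᵀ * (G₁ * (G₂ * G₁) ^ j)),
    posDef_Q (G₁ * G₂) G₂ N₀, posDef_Q (G₂ * G₁) G₁ N₀, ?_, ?_⟩
  · rw [lyap_identity G₁ G₂ (N₀ + 1)]
    exact negdef_of_small _ hK hqm
  · rw [lyap_identity G₂ G₁ (N₀ + 1)]
    exact negdef_of_small _ hH hqp
end

section
/- Consider the block Metzler matrix 𝓜 = [[A₀, [A₁ … A_N]], [𝟙_N ⊗ C₀, 𝟙_N ⊗ [C₁ … C_N] − I_{nN}]] with A₀ Metzler and Aᵢ, C₀, Cᵢ nonnegative. Then 𝓜 is Hurwitz stable if and only if the matrix 𝟙_N ⊗ [C₁ … C_N] − I_{nN} is Hurwitz stable and the Metzler matrix A₀ − [A₁ … A_N](𝟙_N ⊗ [C₁ … C_N] − I_{nN})^{-1}(𝟙_N ⊗ C₀) is Hurwitz stable. -/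
open Matrix

def IsMetzler {m : Type*} [DecidableEq m] (A : Matrix m m ℝ) : Prop :=
  ∀ i j, i ≠ j → 0 ≤ A i j

def IsHurwitz {m : Type*} [Fintype m] [DecidableEq m] (A : Matrix m m ℝ) : Prop :=
  ∀ μ ∈ spectrum ℂ (A.map (fun x => (x : ℂ))), μ.re < 0

section Helpers

variable {a b : Type*} [Fintype a] [Fintype b]

lemma mulVec_entry_nonneg {P : Matrix a b ℝ} (hP : ∀ i j, 0 ≤ P i j)
    {x : b → ℝ} (hx : ∀ j, 0 ≤ x j) (i : a) : 0 ≤ (P *ᵥ x) i :=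
  Finset.sum_nonneg fun j _ => mul_nonneg (hP i j) (hx j)

lemma mulVec_entry_mono {P : Matrix a b ℝ} (hP : ∀ i j, 0 ≤ P i j)
    {x y : b → ℝ} (hxy : ∀ j, x j ≤ y j) (i : a) : (P *ᵥ x) i ≤ (P *ᵥ y) i :=
  Finset.sum_le_sum fun j _ => mul_le_mul_of_nonneg_left (hxy j) (hP i j)

lemma mul_entry_nonneg {c : Type*} {P : Matrix a b ℝ} {Q : Matrix b c ℝ}
    (hP : ∀ i j, 0 ≤ P i j) (hQ : ∀ i j, 0 ≤ Q i j) (i : a) (j : c) : 0 ≤ (P * Q) i j :=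
  Finset.sum_nonneg fun k _ => mul_nonneg (hP i k) (hQ k j)

lemma pow_entry_nonneg_s13 {m : Type*} [Fintype m] [DecidableEq m] {P : Matrix m m ℝ}
    (hP : ∀ i j, 0 ≤ P i j) (k : ℕ) (i j : m) : 0 ≤ (P ^ k) i j := by
  induction k generalizing i j with
  | zero => simp [Matrix.one_apply]; positivity
  | succ n ih => rw [pow_succ]; exact mul_entry_nonneg ih hP i j

end Helpers

section Gershgorin

variable {m : Type*} [Fintype m] [DecidableEq m] {M : Matrix m m ℝ}

lemma isHurwitz_of_exists_pos (hM : IsMetzler M) (v : m → ℝ) (hv : ∀ i, 0 < v i)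
    (hMv : ∀ i, (M *ᵥ v) i < 0) : IsHurwitz M := by
  intro μ hμ
  rw [spectrum.mem_iff, Matrix.isUnit_iff_isUnit_det, isUnit_iff_ne_zero, ne_eq, not_not] at hμ
  obtain ⟨x, hx0, hx⟩ := (Matrix.exists_mulVec_eq_zero_iff).2 hμ
  have key : (M.map fun r => (r : ℂ)) *ᵥ x = μ • x := by
    have h1 : (algebraMap ℂ (Matrix m m ℂ) μ) *ᵥ x = μ • x := by
      rw [Algebra.algebraMap_eq_smul_one, smul_mulVec, one_mulVec]
    rw [Matrix.sub_mulVec, h1] at hx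
    exact (sub_eq_zero.mp hx).symm
  obtain ⟨j, hj⟩ : ∃ j, x j ≠ 0 := Function.ne_iff.mp hx0
  haveI : Nonempty m := ⟨j⟩
  set f : m → ℝ := fun k => ‖x k‖ / v k with hf
  obtain ⟨i, -, hi⟩ := Finset.exists_max_image Finset.univ f ⟨j, Finset.mem_univ j⟩
  have hxv : ∀ k, ‖x k‖ ≤ f i * v k := by
    intro k
    have h1 := hi k (Finset.mem_univ k)
    have h2 : f k * v k = ‖x k‖ := div_mul_cancel₀ _ (hv k).ne'
    nlinarith [hv k]
  have hfi : 0 < f i := by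
    have h1 := hxv j
    have h2 : 0 < ‖x j‖ := norm_pos_iff.mpr hj
    nlinarith [hv j]
  have hxi : ‖x i‖ = f i * v i := (div_mul_cancel₀ _ (hv i).ne').symm
  -- row i of the eigen equation
  have hrow : ∑ k, (M i k : ℂ) * x k = μ * x i := by
    have := congrFun key i
    simpa [Matrix.mulVec, dotProduct, Matrix.map_apply] using this
  have hsplit : (μ - (M i i : ℂ)) * x i = ∑ k ∈ Finset.univ.erase i, (M i k : ℂ) * x k := by
    rw [Finset.sum_erase_eq_sub (Finset.mem_univ i), hrow, sub_mul]
  have hsum2 : ∑ k ∈ Finset.univ.erase i, M i k * v k = (M *ᵥ v) i - M i i * v i := by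
    rw [Finset.sum_erase_eq_sub (Finset.mem_univ i)]
    rfl
  have hbound : ‖μ - (M i i : ℂ)‖ * ‖x i‖ ≤ f i * ((M *ᵥ v) i - M i i * v i) := by
    rw [← norm_mul, hsplit, ← hsum2, Finset.mul_sum]
    refine (norm_sum_le _ _).trans (Finset.sum_le_sum fun k hk => ?_)
    have hk' : k ≠ i := Finset.ne_of_mem_erase hk
    have hMik : 0 ≤ M i k := hM i k (Ne.symm hk')
    rw [norm_mul, Complex.norm_real, Real.norm_of_nonneg hMik]
    calc M i k * ‖x k‖ ≤ M i k * (f i * v k) :=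
          mul_le_mul_of_nonneg_left (hxv k) hMik
      _ = f i * (M i k * v k) := by ring
  have hre : (μ - (M i i : ℂ)).re ≤ ‖μ - (M i i : ℂ)‖ := Complex.re_le_norm _
  have hre2 : (μ - (M i i : ℂ)).re = μ.re - M i i := by simp
  rw [hxi] at hbound
  have h1 : (μ.re - M i i) * v i ≤ ‖μ - (M i i : ℂ)‖ * v i := by
    have := hre2 ▸ hre
    exact mul_le_mul_of_nonneg_right this (hv i).le
  have h3 : (μ.re - M i i) * v i ≤ (M *ᵥ v) i - M i i * v i := by
    have h2 : f i * ((μ.re - M i i) * v i) ≤ f i * ((M *ᵥ v) i - M i i * v i) := by nlinarith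
    exact le_of_mul_le_mul_left h2 hfi
  nlinarith [hMv i, hv i]

end Gershgorin

section UnitCont

variable {m : Type*} [Fintype m] [DecidableEq m] {M : Matrix m m ℝ}

lemma isUnit_det_smul_one_sub (hH : IsHurwitz M) {t : ℝ} (ht : 0 ≤ t) :
    IsUnit (t • (1 : Matrix m m ℝ) - M).det := by
  rw [isUnit_iff_ne_zero]
  intro h0
  have hmap : ((t • (1 : Matrix m m ℝ) - M).map fun r => (r : ℂ)) =
      algebraMap ℂ (Matrix m m ℂ) (t : ℂ) - M.map fun r => (r : ℂ) := by
    ext i j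
    by_cases h : i = j <;>
      simp [Matrix.map_apply, Matrix.sub_apply, Matrix.smul_apply, Matrix.one_apply,
        Matrix.algebraMap_matrix_apply, h]
  have hdet : (algebraMap ℂ (Matrix m m ℂ) (t : ℂ) - M.map fun r => (r : ℂ)).det = 0 := by
    rw [← hmap]
    have h2 := RingHom.map_det (Complex.ofRealHom) (t • (1 : Matrix m m ℝ) - M)
    have h3 : ((t • (1 : Matrix m m ℝ) - M).map fun r => (r : ℂ)).det
        = ((t • (1 : Matrix m m ℝ) - M).det : ℂ) := by
      rw [show ((t • (1 : Matrix m m ℝ) - M).map fun r => (r : ℂ))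
          = Complex.ofRealHom.mapMatrix (t • (1 : Matrix m m ℝ) - M) from rfl, ← h2]; rfl
    rw [h3, h0, Complex.ofReal_zero]
  have hmem : (t : ℂ) ∈ spectrum ℂ (M.map fun x => (x : ℂ)) := by
    rw [spectrum.mem_iff, Matrix.isUnit_iff_isUnit_det, isUnit_iff_ne_zero, ne_eq, not_not]
    exact hdet
  have := hH _ hmem
  rw [Complex.ofReal_re] at this
  linarith

lemma resolvent_entry_continuousAt {τ : ℝ} (hdetne : (τ • (1 : Matrix m m ℝ) - M).det ≠ 0)
    (i j : m) :
    ContinuousAt (fun u : ℝ => (u • (1 : Matrix m m ℝ) - M)⁻¹ i j) τ := by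
  have hgc : Continuous fun u : ℝ => u • (1 : Matrix m m ℝ) - M :=
    (continuous_id.smul continuous_const).sub continuous_const
  have heq : (fun u : ℝ => (u • (1 : Matrix m m ℝ) - M)⁻¹ i j)
      = fun u : ℝ => ((u • (1 : Matrix m m ℝ) - M).det)⁻¹ *
          (u • (1 : Matrix m m ℝ) - M).adjugate i j := by
    funext u
    rw [Matrix.inv_def, Matrix.smul_apply, Ring.inverse_eq_inv', smul_eq_mul]
  rw [heq]
  exact ((hgc.matrix_det.continuousAt).inv₀ hdetne).mul
    ((hgc.matrix_adjugate.matrix_elem i j).continuousAt)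

end UnitCont

section Resolvent

attribute [local instance] Matrix.linftyOpNormedRing Matrix.linftyOpNormedAlgebra

variable {m : Type*} [Fintype m] [DecidableEq m] {M : Matrix m m ℝ}

lemma geom_inv_entries {E : Matrix m m ℝ} (hE : ‖E‖ < 1) (hEpos : ∀ i j, 0 ≤ E i j) (i j : m) :
    0 ≤ (∑' k : ℕ, E ^ k) i j := by
  have hsum : Summable fun k : ℕ => E ^ k := summable_geometric_of_norm_lt_one hE
  let L := LinearMap.toContinuousLinearMap (Matrix.entryLinearMap ℝ ℝ i j)
  have hL : L (∑' k : ℕ, E ^ k) = ∑' k : ℕ, (E ^ k) i j := L.map_tsum hsum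
  have hLe : L (∑' k : ℕ, E ^ k) = (∑' k : ℕ, E ^ k) i j := rfl
  rw [← hLe, hL]
  exact tsum_nonneg fun k => pow_entry_nonneg_s13 hEpos k i j

lemma resolvent_step {τ t : ℝ} (hdet : IsUnit (τ • (1 : Matrix m m ℝ) - M).det)
    (hpos : ∀ i j, 0 ≤ (τ • (1 : Matrix m m ℝ) - M)⁻¹ i j)
    (hts : t ≤ τ) (hsmall : (τ - t) * ‖(τ • (1 : Matrix m m ℝ) - M)⁻¹‖ < 1) :
    ∀ i j, 0 ≤ (t • (1 : Matrix m m ℝ) - M)⁻¹ i j := by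
  set A := τ • (1 : Matrix m m ℝ) - M with hA
  set W := A⁻¹ with hW
  set E := (τ - t) • W with hEdef
  have hnE : ‖E‖ < 1 := by
    rw [hEdef, norm_smul, Real.norm_of_nonneg (by linarith)]; exact hsmall
  have hEpos : ∀ i j, 0 ≤ E i j := by
    intro i j
    rw [hEdef, Matrix.smul_apply, smul_eq_mul]
    exact mul_nonneg (by linarith) (hpos i j)
  set N := ∑' k : ℕ, E ^ k with hN
  have hNE : (1 - E) * N = 1 := mul_neg_geom_series E hnE
  have hfact : (t • (1 : Matrix m m ℝ) - M) = A * (1 - E) := by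
    rw [mul_sub, mul_one, hEdef, mul_smul_comm, Matrix.mul_nonsing_inv _ hdet, hA]
    module
  have hX : (t • (1 : Matrix m m ℝ) - M) * (N * W) = 1 := by
    rw [hfact, mul_assoc, ← mul_assoc (1 - E), hNE, one_mul, Matrix.mul_nonsing_inv _ hdet]
  have hinv : (t • (1 : Matrix m m ℝ) - M)⁻¹ = N * W := Matrix.inv_eq_right_inv hX
  intro i j
  rw [hinv]
  exact mul_entry_nonneg (geom_inv_entries hnE hEpos) hpos i j

lemma resolvent_large (hM : IsMetzler M) :
    ∃ T : ℝ, ∀ t : ℝ, T ≤ t → ∀ i j, 0 ≤ (t • (1 : Matrix m m ℝ) - M)⁻¹ i j := by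
  set s : ℝ := 1 + ∑ i, |M i i| with hs
  have hs0 : 0 < s := by
    have : (0:ℝ) ≤ ∑ i, |M i i| := Finset.sum_nonneg fun i _ => abs_nonneg _
    linarith
  set B := M + s • (1 : Matrix m m ℝ) with hB
  have hBpos : ∀ i j, 0 ≤ B i j := by
    intro i j
    rw [hB, Matrix.add_apply, Matrix.smul_apply, Matrix.one_apply, smul_eq_mul]
    by_cases h : i = j
    · subst h
      have h1 : |M i i| ≤ ∑ k, |M k k| :=
        Finset.single_le_sum (fun k _ => abs_nonneg (M k k)) (Finset.mem_univ i)
      have h2 : -M i i ≤ |M i i| := neg_le_abs _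
      rw [if_pos rfl, mul_one]
      linarith
    · simp only [if_neg h, mul_zero, add_zero]
      exact hM i j h
  refine ⟨‖B‖ + 1, fun t ht i j => ?_⟩
  have hts : ‖B‖ < t + s := by
    have := norm_nonneg B
    linarith
  have hts0 : 0 < t + s := lt_of_le_of_lt (norm_nonneg B) hts
  set c : ℝ := (t + s)⁻¹ with hc
  have hc0 : 0 < c := inv_pos.mpr hts0
  set E := c • B with hEdef
  have hnE : ‖E‖ < 1 := by
    rw [hEdef, norm_smul, Real.norm_of_nonneg hc0.le]
    calc c * ‖B‖ < c * (t + s) := by exact mul_lt_mul_of_pos_left hts hc0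
      _ = 1 := inv_mul_cancel₀ hts0.ne'
  have hEpos : ∀ i j, 0 ≤ E i j := by
    intro i j
    rw [hEdef, Matrix.smul_apply, smul_eq_mul]
    exact mul_nonneg hc0.le (hBpos i j)
  set N := ∑' k : ℕ, E ^ k with hN
  have hNE : (1 - E) * N = 1 := mul_neg_geom_series E hnE
  have h1 : (t + s) • E = B := by
    rw [hEdef, smul_smul, mul_inv_cancel₀ hts0.ne', one_smul]
  have hfact : (t • (1 : Matrix m m ℝ) - M) = (t + s) • ((1 : Matrix m m ℝ) - E) := by
    rw [smul_sub, h1, hB]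
    module
  have hX : (t • (1 : Matrix m m ℝ) - M) * (c • N) = 1 := by
    rw [hfact, smul_mul_smul_comm, mul_inv_cancel₀ hts0.ne', hNE, one_smul]
  have hinv : (t • (1 : Matrix m m ℝ) - M)⁻¹ = c • N := Matrix.inv_eq_right_inv hX
  rw [hinv, Matrix.smul_apply, smul_eq_mul]
  exact mul_nonneg hc0.le (geom_inv_entries hnE hEpos i j)

end Resolvent

section MainResolvent

attribute [local instance] Matrix.linftyOpNormedRing Matrix.linftyOpNormedAlgebra

variable {m : Type*} [Fintype m] [DecidableEq m] {M : Matrix m m ℝ}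

lemma resolvent_nonneg (hM : IsMetzler M) (hH : IsHurwitz M) {t : ℝ} (ht : 0 ≤ t) :
    ∀ i j, 0 ≤ (t • (1 : Matrix m m ℝ) - M)⁻¹ i j := by
  by_contra hcon
  push_neg at hcon
  obtain ⟨T, hT⟩ := resolvent_large hM
  set G := {u : ℝ | 0 ≤ u ∧ ∃ i j, (u • (1 : Matrix m m ℝ) - M)⁻¹ i j < 0} with hG
  have hGne : t ∈ G := by
    obtain ⟨i, j, hij⟩ := hcon
    exact ⟨ht, i, j, hij⟩
  have hGbdd : BddAbove G := by
    refine ⟨T, fun u hu => ?_⟩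
    by_contra hTu
    push_neg at hTu
    obtain ⟨i, j, hij⟩ := hu.2
    exact absurd (hT u hTu.le i j) (not_le.mpr hij)
  set τ := sSup G with hτ
  have hτt : t ≤ τ := le_csSup hGbdd hGne
  have hτ0 : 0 ≤ τ := ht.trans hτt
  have hτdet : IsUnit (τ • (1 : Matrix m m ℝ) - M).det := isUnit_det_smul_one_sub hH hτ0
  have hPτ : ∀ i j, 0 ≤ (τ • (1 : Matrix m m ℝ) - M)⁻¹ i j := by
    intro i j
    have hcont := (resolvent_entry_continuousAt hτdet.ne_zero i j).continuousWithinAt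
      (s := Set.Ioi τ)
    refine ge_of_tendsto hcont ?_
    filter_upwards [self_mem_nhdsWithin] with u hu
    have huτ : τ < u := hu
    have huG : u ∉ G := fun hmem => absurd (le_csSup hGbdd hmem) (not_le.mpr huτ)
    rw [hG, Set.mem_setOf_eq, not_and] at huG
    have := huG (hτ0.trans huτ.le)
    push_neg at this
    exact this i j
  set W := (τ • (1 : Matrix m m ℝ) - M)⁻¹ with hWdef
  have hWpos : 0 < ‖W‖ + 1 := by positivity
  obtain ⟨g, hgG, hglt⟩ := exists_lt_of_lt_csSup ⟨t, hGne⟩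
    (show τ - (‖W‖ + 1)⁻¹ < τ by
      have : 0 < (‖W‖ + 1)⁻¹ := by positivity
      linarith)
  have hgτ : g ≤ τ := le_csSup hGbdd hgG
  have hsmall : (τ - g) * ‖W‖ < 1 := by
    have h1 : τ - g < (‖W‖ + 1)⁻¹ := by linarith
    have h2 : (τ - g) * (‖W‖ + 1) < (‖W‖ + 1)⁻¹ * (‖W‖ + 1) :=
      mul_lt_mul_of_pos_right h1 hWpos
    rw [inv_mul_cancel₀ hWpos.ne'] at h2
    nlinarith [norm_nonneg W]
  have hstep := resolvent_step hτdet hPτ hgτ hsmall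
  obtain ⟨i, j, hij⟩ := hgG.2
  exact absurd (hstep i j) (not_le.mpr hij)

lemma exists_pos_mulVec_neg (hM : IsMetzler M) (hH : IsHurwitz M) :
    ∃ v : m → ℝ, (∀ i, 0 < v i) ∧ ∀ i, (M *ᵥ v) i < 0 := by
  have hdet0 : IsUnit (-M).det := by
    have := isUnit_det_smul_one_sub hH (le_refl (0:ℝ))
    simpa using this
  have hinv0 : ∀ i j, 0 ≤ (-M)⁻¹ i j := by
    intro i j
    have := resolvent_nonneg hM hH (le_refl (0:ℝ)) i j
    simpa using this
  set v : m → ℝ := (-M)⁻¹ *ᵥ (fun _ => 1) with hv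
  have hvnn : ∀ i, 0 ≤ v i := fun i => mulVec_entry_nonneg hinv0 (fun _ => zero_le_one) i
  have hMv : ∀ i, (M *ᵥ v) i = -1 := by
    intro i
    have h1 : M *ᵥ v = -((-M) *ᵥ v) := by rw [Matrix.neg_mulVec, neg_neg]
    have h2 : (-M) *ᵥ v = (fun _ => (1:ℝ)) := by
      rw [hv, Matrix.mulVec_mulVec, Matrix.mul_nonsing_inv _ hdet0, Matrix.one_mulVec]
    rw [h1, h2]
    rfl
  refine ⟨v, fun i => ?_, fun i => by rw [hMv i]; norm_num⟩
  rcases lt_or_eq_of_le (hvnn i) with h | h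
  · exact h
  · exfalso
    have h0 : (M *ᵥ v) i = ∑ j, M i j * v j := rfl
    have hge : 0 ≤ (M *ᵥ v) i := by
      rw [h0]
      refine Finset.sum_nonneg fun j _ => ?_
      by_cases hij : i = j
      · rw [← hij, ← h]; simp
      · exact mul_nonneg (hM i j hij) (hvnn j)
    rw [hMv i] at hge
    linarith

end MainResolvent

section MainDefs

/-- `[A₁ … A_N]` : the horizontal concatenation. -/
def rowCat {n N : ℕ} (A : Fin N → Matrix (Fin n) (Fin n) ℝ) :
    Matrix (Fin n) (Fin N × Fin n) ℝ :=
  Matrix.of fun i jl => A jl.1 i jl.2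

/-- `𝟙_N ⊗ C₀` : the vertical stacking of N copies of `C₀`. -/
def colRep {n N : ℕ} (C₀ : Matrix (Fin n) (Fin n) ℝ) :
    Matrix (Fin N × Fin n) (Fin n) ℝ :=
  Matrix.of fun ik j => C₀ ik.2 j

/-- `𝟙_N ⊗ [C₁ … C_N]` : each block row equals `[C₁ … C_N]`. -/
def repRowCat {n N : ℕ} (C : Fin N → Matrix (Fin n) (Fin n) ℝ) :
    Matrix (Fin N × Fin n) (Fin N × Fin n) ℝ :=
  Matrix.of fun ik jl => C jl.1 ik.2 jl.2

/-- The block matrix 𝓜 of the coupled differential-difference system. -/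
noncomputable def cddMatrix {n N : ℕ} (A₀ : Matrix (Fin n) (Fin n) ℝ)
    (A : Fin N → Matrix (Fin n) (Fin n) ℝ)
    (C₀ : Matrix (Fin n) (Fin n) ℝ) (C : Fin N → Matrix (Fin n) (Fin n) ℝ) :
    Matrix (Fin n ⊕ (Fin N × Fin n)) (Fin n ⊕ (Fin N × Fin n)) ℝ :=
  Matrix.fromBlocks A₀ (rowCat A) (colRep C₀) (repRowCat C - 1)

end MainDefs

section MainAux

lemma mul_entry_nonpos_left {a b c : Type*} [Fintype b] {P : Matrix a b ℝ} {Q : Matrix b c ℝ}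
    (hP : ∀ i j, 0 ≤ P i j) (hQ : ∀ i j, Q i j ≤ 0) (i : a) (j : c) : (P * Q) i j ≤ 0 :=
  Finset.sum_nonpos fun k _ => mul_nonpos_of_nonneg_of_nonpos (hP i k) (hQ k j)

lemma mul_entry_nonpos_right {a b c : Type*} [Fintype b] {P : Matrix a b ℝ} {Q : Matrix b c ℝ}
    (hP : ∀ i j, P i j ≤ 0) (hQ : ∀ i j, 0 ≤ Q i j) (i : a) (j : c) : (P * Q) i j ≤ 0 :=
  Finset.sum_nonpos fun k _ => mul_nonpos_of_nonpos_of_nonneg (hP i k) (hQ k j)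

lemma isUnit_det_of_metzler_hurwitz {m : Type*} [Fintype m] [DecidableEq m]
    {M : Matrix m m ℝ} (hH : IsHurwitz M) : IsUnit M.det := by
  have h := isUnit_det_smul_one_sub hH (le_refl (0:ℝ))
  rw [zero_smul, zero_sub, Matrix.det_neg] at h
  exact (IsUnit.mul_iff.mp h).2

lemma inv_entries_nonpos_of_metzler_hurwitz {m : Type*} [Fintype m] [DecidableEq m]
    {M : Matrix m m ℝ} (hM : IsMetzler M) (hH : IsHurwitz M) (i j : m) : M⁻¹ i j ≤ 0 := by
  have hdet := isUnit_det_of_metzler_hurwitz hH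
  have h := resolvent_nonneg hM hH (le_refl (0:ℝ)) i j
  rw [zero_smul, zero_sub] at h
  have hne : (-M)⁻¹ = -(M⁻¹) := Matrix.inv_eq_right_inv
    (by rw [neg_mul_neg, Matrix.mul_nonsing_inv _ hdet])
  rw [hne] at h
  simpa using h

end MainAux

theorem stmt13 {n N : ℕ} (A₀ : Matrix (Fin n) (Fin n) ℝ)
    (A : Fin N → Matrix (Fin n) (Fin n) ℝ)
    (C₀ : Matrix (Fin n) (Fin n) ℝ) (C : Fin N → Matrix (Fin n) (Fin n) ℝ)
    (hA₀ : IsMetzler A₀) (hA : ∀ i, ∀ k l, 0 ≤ A i k l)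
    (hC₀ : ∀ k l, 0 ≤ C₀ k l) (hC : ∀ i, ∀ k l, 0 ≤ C i k l) :
    IsHurwitz (cddMatrix A₀ A C₀ C) ↔
      IsHurwitz (repRowCat C - 1) ∧
      IsHurwitz (A₀ - rowCat A * (repRowCat C - 1)⁻¹ * colRep C₀) := by
  set B := rowCat A with hBdef
  set Cm := colRep C₀ with hCmdef
  set D := repRowCat C - 1 with hDdef
  have hBe : ∀ i jl, 0 ≤ B i jl := fun i jl => hA jl.1 i jl.2
  have hCe : ∀ ik j, 0 ≤ Cm ik j := fun ik j => hC₀ ik.2 j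
  have hDM : IsMetzler D := by
    intro ik jl hne
    rw [hDdef, Matrix.sub_apply, Matrix.one_apply, if_neg hne, sub_zero]
    exact hC jl.1 ik.2 jl.2
  have h𝓜M : IsMetzler (cddMatrix A₀ A C₀ C) := by
    intro p q hne
    rcases p with i | ik <;> rcases q with j | jl
    · have hij : i ≠ j := fun h => hne (by rw [h])
      simpa [cddMatrix] using hA₀ i j hij
    · simpa [cddMatrix, rowCat] using hA jl.1 i jl.2
    · simpa [cddMatrix, colRep] using hC₀ ik.2 j
    · have hij : ik ≠ jl := fun h => hne (by rw [h])
      exact hDM ik jl hij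
  constructor
  · -- forward
    intro h𝓜
    obtain ⟨w, hw, hMw⟩ := exists_pos_mulVec_neg h𝓜M h𝓜
    set u : Fin n → ℝ := w ∘ Sum.inl with hu
    set v : Fin N × Fin n → ℝ := w ∘ Sum.inr with hv
    have hmv : (cddMatrix A₀ A C₀ C) *ᵥ w =
        Sum.elim (A₀ *ᵥ u + B *ᵥ v) (Cm *ᵥ u + D *ᵥ v) := by
      simp only [cddMatrix, ← hBdef, ← hCmdef, ← hDdef]
      exact Matrix.fromBlocks_mulVec A₀ B Cm D w
    have h1 : ∀ i, (A₀ *ᵥ u) i + (B *ᵥ v) i < 0 := by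
      intro i
      have := hMw (Sum.inl i)
      rw [hmv] at this
      simpa using this
    have h2 : ∀ k, (Cm *ᵥ u) k + (D *ᵥ v) k < 0 := by
      intro k
      have := hMw (Sum.inr k)
      rw [hmv] at this
      simpa using this
    have hDv : ∀ k, (D *ᵥ v) k < 0 := by
      intro k
      have := mulVec_entry_nonneg hCe (x := u) (fun j => (hw (Sum.inl j)).le) k
      linarith [h2 k]
    have hDHur : IsHurwitz D := isHurwitz_of_exists_pos hDM v (fun k => hw (Sum.inr k)) hDv
    have hDdet : IsUnit D.det := isUnit_det_of_metzler_hurwitz hDHur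
    have hDinv : ∀ i j, D⁻¹ i j ≤ 0 := inv_entries_nonpos_of_metzler_hurwitz hDM hDHur
    have hSM : IsMetzler (A₀ - B * D⁻¹ * Cm) := by
      intro i j hij
      rw [Matrix.sub_apply]
      have hmul : (B * D⁻¹ * Cm) i j ≤ 0 :=
        mul_entry_nonpos_right (mul_entry_nonpos_left hBe hDinv) hCe i j
      have := hA₀ i j hij
      linarith
    have hSu : ∀ i, ((A₀ - B * D⁻¹ * Cm) *ᵥ u) i < 0 := by
      intro i
      set y : Fin N × Fin n → ℝ := -(D⁻¹ *ᵥ (Cm *ᵥ u)) with hy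
      have hSv : (A₀ - B * D⁻¹ * Cm) *ᵥ u = A₀ *ᵥ u + B *ᵥ y := by
        rw [Matrix.sub_mulVec, hy, Matrix.mulVec_neg, ← sub_eq_add_neg]
        congr 1
        rw [Matrix.mulVec_mulVec, Matrix.mulVec_mulVec]
      have hyneg : y = (-(D⁻¹)) *ᵥ (Cm *ᵥ u) := by rw [Matrix.neg_mulVec, hy]
      have hyv : ∀ k, y k ≤ v k := by
        intro k
        have hmono : ((-(D⁻¹)) *ᵥ (Cm *ᵥ u)) k ≤ ((-(D⁻¹)) *ᵥ (-(D *ᵥ v))) k := by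
          refine mulVec_entry_mono (fun a b => ?_) (fun l => ?_) k
          · simpa using hDinv a b
          · have := h2 l
            simp only [Pi.neg_apply]
            linarith
        have heqv : ((-(D⁻¹)) *ᵥ (-(D *ᵥ v))) = v := by
          rw [Matrix.neg_mulVec, Matrix.mulVec_neg, neg_neg, Matrix.mulVec_mulVec,
            Matrix.nonsing_inv_mul _ hDdet, Matrix.one_mulVec]
        rw [hyneg]
        rw [heqv] at hmono
        exact hmono
      have hBy : (B *ᵥ y) i ≤ (B *ᵥ v) i := mulVec_entry_mono hBe hyv i
      rw [hSv]
      have := h1 i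
      simp only [Pi.add_apply]
      linarith
    exact ⟨hDHur, isHurwitz_of_exists_pos hSM u (fun i => hw (Sum.inl i)) hSu⟩
  · -- reverse
    rintro ⟨hDHur, hSHur⟩
    have hDdet : IsUnit D.det := isUnit_det_of_metzler_hurwitz hDHur
    have hDinv : ∀ i j, D⁻¹ i j ≤ 0 := inv_entries_nonpos_of_metzler_hurwitz hDM hDHur
    have hSM : IsMetzler (A₀ - B * D⁻¹ * Cm) := by
      intro i j hij
      rw [Matrix.sub_apply]
      have hmul : (B * D⁻¹ * Cm) i j ≤ 0 :=
        mul_entry_nonpos_right (mul_entry_nonpos_left hBe hDinv) hCe i j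
      have := hA₀ i j hij
      linarith
    obtain ⟨u, hupos, hSu⟩ := exists_pos_mulVec_neg hSM hSHur
    obtain ⟨v₀, hv₀pos, hDv₀⟩ := exists_pos_mulVec_neg hDM hDHur
    -- choose ε
    obtain ⟨ε, hε1, hε0⟩ : ∃ ε : ℝ, (∀ i, ((A₀ - B * D⁻¹ * Cm) *ᵥ u) i
        + ε * (B *ᵥ v₀) i < 0) ∧ 0 < ε := by
      have hev : ∀ᶠ ε : ℝ in nhds 0, ∀ i, ((A₀ - B * D⁻¹ * Cm) *ᵥ u) i
          + ε * (B *ᵥ v₀) i < 0 := by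
        rw [Filter.eventually_all]
        intro i
        have hcont : Filter.Tendsto (fun ε : ℝ => ((A₀ - B * D⁻¹ * Cm) *ᵥ u) i
            + ε * (B *ᵥ v₀) i) (nhds 0)
            (nhds (((A₀ - B * D⁻¹ * Cm) *ᵥ u) i + 0 * (B *ᵥ v₀) i)) :=
          (continuous_const.add (continuous_id.mul continuous_const)).continuousAt
        refine hcont.eventually_lt_const ?_
        simpa using hSu i
      have h2 : ∀ᶠ ε : ℝ in nhdsWithin 0 (Set.Ioi 0), (∀ i, ((A₀ - B * D⁻¹ * Cm) *ᵥ u) i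
          + ε * (B *ᵥ v₀) i < 0) ∧ 0 < ε :=
        (hev.filter_mono nhdsWithin_le_nhds).and
          (by filter_upwards [self_mem_nhdsWithin] with x hx; exact hx)
      exact h2.exists
    set y : Fin N × Fin n → ℝ := -(D⁻¹ *ᵥ (Cm *ᵥ u)) with hy
    have hynn : ∀ k, 0 ≤ y k := by
      intro k
      have hyneg : y = (-(D⁻¹)) *ᵥ (Cm *ᵥ u) := by rw [Matrix.neg_mulVec, hy]
      rw [hyneg]
      exact mulVec_entry_nonneg (fun a b => by simpa using hDinv a b)
        (mulVec_entry_nonneg hCe (fun j => (hupos j).le)) k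
    set v : Fin N × Fin n → ℝ := y + ε • v₀ with hv
    have hvpos : ∀ k, 0 < v k := by
      intro k
      have := mul_pos hε0 (hv₀pos k)
      have := hynn k
      simp only [hv, Pi.add_apply, Pi.smul_apply, smul_eq_mul]
      linarith
    have hDy : D *ᵥ y = -(Cm *ᵥ u) := by
      rw [hy, Matrix.mulVec_neg, Matrix.mulVec_mulVec,
        Matrix.mul_nonsing_inv _ hDdet, Matrix.one_mulVec]
    have hDv : D *ᵥ v = -(Cm *ᵥ u) + ε • (D *ᵥ v₀) := by
      rw [hv, Matrix.mulVec_add, hDy, Matrix.mulVec_smul]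
    have hBy : (A₀ - B * D⁻¹ * Cm) *ᵥ u = A₀ *ᵥ u + B *ᵥ y := by
      rw [Matrix.sub_mulVec, hy, Matrix.mulVec_neg, ← sub_eq_add_neg]
      congr 1
      rw [Matrix.mulVec_mulVec, Matrix.mulVec_mulVec]
    set w : (Fin n ⊕ (Fin N × Fin n)) → ℝ := Sum.elim u v with hw
    have hwpos : ∀ p, 0 < w p := by
      intro p
      rcases p with i | k
      · exact hupos i
      · exact hvpos k
    have h𝓜w : ∀ p, ((cddMatrix A₀ A C₀ C) *ᵥ w) p < 0 := by
      have hmv : (cddMatrix A₀ A C₀ C) *ᵥ w =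
          Sum.elim (A₀ *ᵥ u + B *ᵥ v) (Cm *ᵥ u + D *ᵥ v) := by
        simp only [cddMatrix, ← hBdef, ← hCmdef, ← hDdef]
        have := Matrix.fromBlocks_mulVec A₀ B Cm D w
        simpa [hw] using this
      intro p
      rw [hmv]
      rcases p with i | k
      · simp only [Sum.elim_inl, Pi.add_apply]
        have hBv : (B *ᵥ v) i = (B *ᵥ y) i + ε * (B *ᵥ v₀) i := by
          rw [hv, Matrix.mulVec_add, Matrix.mulVec_smul]
          simp
        have h3 := hε1 i
        rw [hBy] at h3
        simp only [Pi.add_apply] at h3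
        linarith [hBv]
      · simp only [Sum.elim_inr, Pi.add_apply]
        rw [hDv]
        have := mul_pos hε0 (hv₀pos k)
        have h4 := hDv₀ k
        simp only [Pi.add_apply, Pi.neg_apply, Pi.smul_apply, smul_eq_mul]
        nlinarith
    exact isHurwitz_of_exists_pos h𝓜M w hwpos h𝓜w
end
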